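/- arXiv:1912.04725 — 4 statements merged into one kernel-verified Lean document; each statement's English description precedes it below -/
import Mathlib

section
/- If σ ∈ S_n avoids 4231 but is not smooth (i.e., is not covexillary), then there exists an index i such that, with m_σ(x) = max σ([x]): m_σ(m_{σ^{-1}}(i)) > m_σ(i) > i and m_{σ^{-1}}(m_σ(i)) > m_{σ^{-1}}(i) > i. -/
namespace SmoothPerm

variable {n : ℕ}

/-- Bruhat order on `S_n`, via the standard counting criterion. -/
def bruhatLE (τ σ : Equiv.Perm (Fin n)) : Prop :=
  ∀ i j : Fin n,
    (Finset.univ.filter (fun x => x ≤ i ∧ σ x ≤ j)).card ≤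
      (Finset.univ.filter (fun x => x ≤ i ∧ τ x ≤ j)).card

/-- Number of inversions (the length ℓ(σ)). -/
def invNum (σ : Equiv.Perm (Fin n)) : ℕ :=
  (Finset.univ.filter (fun p : Fin n × Fin n => p.1 < p.2 ∧ σ p.2 < σ p.1)).card

def isTransposition (τ : Equiv.Perm (Fin n)) : Prop :=
  ∃ i j : Fin n, i < j ∧ τ = Equiv.swap i j

/-- σ is smooth iff ℓ(σ) equals the number of transpositions Bruhat-below σ. -/
def smooth (σ : Equiv.Perm (Fin n)) : Prop :=
  invNum σ = Nat.card {τ : Equiv.Perm (Fin n) // isTransposition τ ∧ bruhatLE τ σ}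

def avoids4231 (σ : Equiv.Perm (Fin n)) : Prop :=
  ¬ ∃ a b c d : Fin n, a < b ∧ b < c ∧ c < d ∧ σ d < σ b ∧ σ b < σ c ∧ σ c < σ a

/-- covexillary = 3412-avoiding. -/
def covexillary (σ : Equiv.Perm (Fin n)) : Prop :=
  ¬ ∃ a b c d : Fin n, a < b ∧ b < c ∧ c < d ∧ σ c < σ d ∧ σ d < σ a ∧ σ a < σ b

def avoids321 (σ : Equiv.Perm (Fin n)) : Prop :=
  ¬ ∃ a b c : Fin n, a < b ∧ b < c ∧ σ c < σ b ∧ σ b < σ a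

/-- The 3-cycle i ↦ j ↦ k ↦ i. -/
def Rc (i j k : Fin n) : Equiv.Perm (Fin n) := Equiv.swap i k * Equiv.swap i j

def Lc (i j k : Fin n) : Equiv.Perm (Fin n) := (Rc i j k)⁻¹

def inC23 (τ : Equiv.Perm (Fin n)) : Prop :=
  isTransposition τ ∨ ∃ i j k : Fin n, i < j ∧ j < k ∧ (τ = Rc i j k ∨ τ = Lc i j k)

/-- The 2-3-table of σ. -/
def Ctab (σ : Equiv.Perm (Fin n)) : Set (Equiv.Perm (Fin n)) :=
  {τ | inC23 τ ∧ bruhatLE τ σ}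

def admissible (A : Set (Equiv.Perm (Fin n))) : Prop :=
  (∀ τ ∈ A, inC23 τ) ∧
  (∀ σ ∈ A, ∀ τ : Equiv.Perm (Fin n), inC23 τ → bruhatLE τ σ → τ ∈ A) ∧
  (∀ i j k l : Fin n, i < j → j < l → i < k → k < l →
    Rc i j l ∈ A → Lc i k l ∈ A → Equiv.swap i l ∈ A) ∧
  (∀ i j k : Fin n, i < j → j < k →
    Equiv.swap i j ∈ A → Equiv.swap j k ∈ A → (Rc i j k ∈ A ∨ Lc i j k ∈ A))

def isWedge (A : Set (Equiv.Perm (Fin n))) (i j : Fin n) : Prop :=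
  i < j ∧ Equiv.swap i j ∈ A ∧
  (∀ i' : Fin n, (i' : ℕ) + 1 = (i : ℕ) → Equiv.swap i' i ∉ A) ∧
  (∀ j' : Fin n, (j : ℕ) + 1 = (j' : ℕ) → Rc i j j' ∉ A)

def derivedSet (A : Set (Equiv.Perm (Fin n))) (i j : Fin n) : Set (Equiv.Perm (Fin n)) :=
  A \ ({Equiv.swap i j} ∪ {τ | ∃ k, j < k ∧ τ = Lc i j k} ∪
       {τ | ∃ k, i < k ∧ k < j ∧ τ = Rc i k j})

def strictTotalOn (S : Set (Equiv.Perm (Fin n)))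
    (r : Equiv.Perm (Fin n) → Equiv.Perm (Fin n) → Prop) : Prop :=
  (∀ x ∈ S, ¬ r x x) ∧
  (∀ x ∈ S, ∀ y ∈ S, ∀ z ∈ S, r x y → r y z → r x z) ∧
  (∀ x ∈ S, ∀ y ∈ S, x ≠ y → r x y ∨ r y x)

def compatibleOrder (A : Set (Equiv.Perm (Fin n)))
    (r : Equiv.Perm (Fin n) → Equiv.Perm (Fin n) → Prop) : Prop :=
  (∀ i j k : Fin n, i < j → j < k → Rc i j k ∈ A → Lc i j k ∉ A →
    r (Equiv.swap i j) (Equiv.swap j k)) ∧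
  (∀ i j k : Fin n, i < j → j < k → Lc i j k ∈ A → Rc i j k ∉ A →
    r (Equiv.swap j k) (Equiv.swap i j)) ∧
  (∀ i j k : Fin n, i < j → j < k → Equiv.swap i k ∈ A →
    ((r (Equiv.swap i j) (Equiv.swap i k) ∧ r (Equiv.swap i k) (Equiv.swap j k)) ∨
     (r (Equiv.swap j k) (Equiv.swap i k) ∧ r (Equiv.swap i k) (Equiv.swap i j))))

def coversIn (S : Set (Equiv.Perm (Fin n)))
    (r : Equiv.Perm (Fin n) → Equiv.Perm (Fin n) → Prop)
    (x y : Equiv.Perm (Fin n)) : Prop :=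
  x ∈ S ∧ y ∈ S ∧ r x y ∧ ∀ z ∈ S, ¬ (r x z ∧ r z y)

/-- m_σ(i) = max σ([i]). -/
def maxS (σ : Equiv.Perm (Fin n)) (i : Fin n) : Fin n :=
  ((Finset.univ.filter (fun x => x ≤ i)).image (fun x => σ x)).max'
    ⟨σ i, Finset.mem_image_of_mem _ (by simp)⟩

/-- The cyclic shift i → i+1 → ⋯ → j → i. -/
def Rseg (i j : Fin n) : Equiv.Perm (Fin n) :=
  ((List.finRange n).filter (fun x => decide (i ≤ x ∧ x ≤ j))).formPerm

def definedByInclusions (σ : Equiv.Perm (Fin n)) : Prop :=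
  ∀ τ : Equiv.Perm (Fin n),
    (∀ x, maxS τ x ≤ maxS σ x) → (∀ x, maxS τ⁻¹ x ≤ maxS σ⁻¹ x) → bruhatLE τ σ

lemma perm_apply_inv_self (σ : Equiv.Perm (Fin n)) (x : Fin n) : σ (σ⁻¹ x) = x :=
  Equiv.apply_symm_apply σ x

lemma perm_inv_apply_self (σ : Equiv.Perm (Fin n)) (x : Fin n) : σ⁻¹ (σ x) = x :=
  Equiv.symm_apply_apply σ x

lemma le_maxS (σ : Equiv.Perm (Fin n)) {x i : Fin n} (h : x ≤ i) : σ x ≤ maxS σ i :=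
  Finset.le_max' _ _ (Finset.mem_image_of_mem _ (by simp [h]))

lemma maxS_spec (σ : Equiv.Perm (Fin n)) (i : Fin n) : ∃ p, p ≤ i ∧ σ p = maxS σ i := by
  have h := Finset.max'_mem ((Finset.univ.filter (fun x => x ≤ i)).image (fun x => σ x))
    ⟨σ i, Finset.mem_image_of_mem _ (by simp)⟩
  rw [Finset.mem_image] at h
  obtain ⟨p, hp, hp2⟩ := h
  exact ⟨p, by simpa using hp, hp2⟩

lemma maxS_mono (σ : Equiv.Perm (Fin n)) {i j : Fin n} (h : i ≤ j) : maxS σ i ≤ maxS σ j := by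
  apply Finset.max'_le
  intro y hy
  rw [Finset.mem_image] at hy
  obtain ⟨x, hx, rfl⟩ := hy
  exact le_maxS σ (le_trans (by simpa using hx) h)

lemma image_Iic_eq (σ : Equiv.Perm (Fin n)) (i : Fin n) (h : ∀ x ≤ i, σ x ≤ i) :
    (Finset.Iic i).image σ = Finset.Iic i := by
  apply Finset.eq_of_subset_of_card_le
  · intro v hv
    rcases Finset.mem_image.mp hv with ⟨x, hx, rfl⟩
    exact Finset.mem_Iic.mpr (h x (Finset.mem_Iic.mp hx))
  · rw [Finset.card_image_of_injective _ σ.injective]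

lemma pigeon (σ : Equiv.Perm (Fin n)) (i : Fin n)
    (h : ∀ x ≤ i, σ x ≤ i) : ∀ y, σ y ≤ i → y ≤ i := by
  intro y hy
  have heq := image_Iic_eq σ i h
  have : σ y ∈ (Finset.Iic i).image σ := by rw [heq]; exact Finset.mem_Iic.mpr hy
  rcases Finset.mem_image.mp this with ⟨x, hx, hxy⟩
  exact (σ.injective hxy) ▸ Finset.mem_Iic.mp hx

lemma self_le_maxS (σ : Equiv.Perm (Fin n)) (i : Fin n) : i ≤ maxS σ i := by
  by_contra h
  push_neg at h
  have hall : ∀ x ≤ i, σ x ≤ i := fun x hx => le_of_lt (lt_of_le_of_lt (le_maxS σ hx) h)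
  have heq := image_Iic_eq σ i hall
  have : i ∈ (Finset.Iic i).image σ := by rw [heq]; exact Finset.mem_Iic.mpr le_rfl
  rcases Finset.mem_image.mp this with ⟨x, hx, hxy⟩
  have h2 := le_maxS σ (Finset.mem_Iic.mp hx)
  rw [hxy] at h2
  exact absurd h2 (not_le.mpr h)

lemma apply_maxS_inv_le (σ : Equiv.Perm (Fin n)) (i : Fin n) : σ (maxS σ⁻¹ i) ≤ i := by
  obtain ⟨v, hv, hvp⟩ := maxS_spec σ⁻¹ i
  rw [← hvp]
  simpa using hv

lemma le_maxS_inv (σ : Equiv.Perm (Fin n)) {p i : Fin n} (h : σ p ≤ i) : p ≤ maxS σ⁻¹ i := by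
  have := le_maxS σ⁻¹ h
  simpa using this



lemma key_lemma (σ : Equiv.Perm (Fin n)) (h4231 : avoids4231 σ)
    (a b c d : Fin n) (hab : a < b) (hbc : b < c) (hcd : c < d)
    (hcd' : σ c < σ d) (hda : σ d < σ a) (hab' : σ a < σ b)
    (hmin : ∀ a' b' c' d' : Fin n, a' < b' → b' < c' → c' < d' →
      σ c' < σ d' → σ d' < σ a' → σ a' < σ b' → max a (σ c) ≤ max a' (σ c')) :
    max a (σ c) < maxS σ (max a (σ c)) ∧
    maxS σ (max a (σ c)) < maxS σ (maxS σ⁻¹ (max a (σ c))) := by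
  set i := max a (σ c) with hi
  have hai : a ≤ i := le_max_left _ _
  have hci : σ c ≤ i := le_max_right _ _
  have hcontra : ¬ (∀ x : Fin n, σ x ≤ i ↔ x ≤ i) := by
    intro H
    have hc_le : c ≤ i := (H c).mp hci
    rcases max_cases a (σ c) with ⟨hia, _⟩ | ⟨hia, hlt⟩
    · rw [hi, hia] at hc_le
      exact absurd (lt_trans hab hbc) (not_lt.mpr hc_le)
    · have hb_le : b ≤ i := le_trans (le_of_lt hbc) hc_le
      have h1 : σ b ≤ i := (H b).mpr hb_le
      have h2 : i < σ b := by
        rw [hi, hia]; exact lt_trans (lt_trans hcd' hda) hab'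
      exact absurd h1 (not_le.mpr h2)
  have i_lt_max : i < maxS σ i := by
    rcases lt_or_eq_of_le (self_le_maxS σ i) with h | h
    · exact h
    · exfalso
      apply hcontra
      intro x
      constructor
      · intro hx
        exact pigeon σ i (fun y hy => h ▸ le_maxS σ hy) x hx
      · intro hx
        have := le_maxS σ hx
        rw [← h] at this
        exact this
  have i_lt_maxinv : i < maxS σ⁻¹ i := by
    rcases lt_or_eq_of_le (self_le_maxS σ⁻¹ i) with h | h
    · exact h
    · exfalso
      apply hcontra
      intro x
      have hpig : ∀ y, σ⁻¹ y ≤ i → y ≤ i :=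
        pigeon σ⁻¹ i (fun y hy => h ▸ le_maxS σ⁻¹ hy)
      have hall : ∀ y ≤ i, σ⁻¹ y ≤ i := fun y hy => h ▸ le_maxS σ⁻¹ hy
      constructor
      · intro hx
        have := hall (σ x) hx
        simpa using this
      · intro hx
        exact hpig (σ x) (by simpa using hx)
  refine ⟨i_lt_max, ?_⟩
  set j := maxS σ⁻¹ i with hj
  set M := maxS σ i with hM
  have hij : i < j := i_lt_maxinv
  have hle : M ≤ maxS σ j := maxS_mono σ (le_of_lt hij)
  rcases lt_or_eq_of_le hle with h | heq
  · exact h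
  exfalso
  have F1 : ∀ q, q ≤ j → σ q ≤ M := fun q hq => heq ▸ le_maxS σ hq
  obtain ⟨p0, hp0i, hp0⟩ := maxS_spec σ i
  have F2 : ∀ q, q ≤ j → q ≠ p0 → σ q < M := fun q hq hne =>
    lt_of_le_of_ne (F1 q hq) (fun h => hne (σ.injective (h.trans hp0.symm)))
  have F3 : ∀ p, σ p ≤ i → p ≤ j := fun p hp => le_maxS_inv σ hp
  have F4 : σ j ≤ i := apply_maxS_inv_le σ i
  have hcj : c ≤ j := F3 c hci
  rcases le_or_gt (σ c) a with hca | hca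
  · -- Case A : i = a
    have hia : i = a := max_eq_left hca
    have hp0a : p0 ≤ a := hia ▸ hp0i
    have hbj : b ≤ j := le_trans (le_of_lt hbc) hcj
    rcases lt_or_eq_of_le hp0a with hp0a | hp0a
    · have hσb : σ b < M := F2 b hbj (ne_of_gt (lt_trans hp0a hab))
      exact h4231 ⟨p0, a, b, c, hp0a, hab, hbc,
        lt_trans hcd' hda, hab', by rw [hp0]; exact hσb⟩
    · have hσa : σ a = M := by rw [← hp0a]; exact hp0
      have hσb : σ b < M := F2 b hbj (fun h => absurd (h ▸ hab) (by rw [hp0a]; exact lt_irrefl a))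
      rw [← hσa] at hσb
      exact absurd hab' (not_lt.mpr (le_of_lt hσb))
  · -- Case B : i = σ c
    have hia : i = σ c := max_eq_right (le_of_lt hca)
    rcases lt_or_eq_of_le hcj with hcj' | hcj'
    · -- B1 : c < j
      have hjc : σ j < σ c := by
        rcases lt_or_eq_of_le (hia ▸ F4) with h | h
        · exact h
        · exact absurd (σ.injective h) (ne_of_gt hcj')
      rcases lt_trichotomy j d with hjd | hjd | hjd
      · have := hmin a b j d hab (lt_trans hbc hcj') hjd
          (lt_trans hjc hcd') hda hab'
        exact absurd this (not_le.mpr (max_lt (by rw [hia]; exact hca) (by rw [hia]; exact hjc)))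
      · rw [hjd] at hjc
        exact absurd hjc (not_lt.mpr (le_of_lt hcd'))
      · exact h4231 ⟨b, c, d, j, hbc, hcd, hjd, hjc, hcd', lt_trans hda hab'⟩
    · -- B2 : c = j
      set W := Finset.univ.filter (fun p => a < p ∧ p < c ∧ σ a < σ p) with hW
      have hbW : b ∈ W := by simp [hW, hab, hbc, hab']
      set w := W.min' ⟨b, hbW⟩ with hw
      have hwW : w ∈ W := Finset.min'_mem _ _
      have haw : a < w := by
        have := hwW; rw [hW, Finset.mem_filter] at this; exact this.2.1
      have hwc : w < c := by
        have := hwW; rw [hW, Finset.mem_filter] at this; exact this.2.2.1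
      have hσaw : σ a < σ w := by
        have := hwW; rw [hW, Finset.mem_filter] at this; exact this.2.2.2
      by_cases hq : ∃ q, w < q ∧ q < c ∧ σ q < σ c
      · obtain ⟨q, hq1, hq2, hq3⟩ := hq
        have := hmin a w q c haw hq1 hq2 hq3 (lt_trans hcd' hda) hσaw
        exact absurd this (not_le.mpr (max_lt (by rw [hia]; exact hca) (by rw [hia]; exact hq3)))
      push_neg at hq
      -- positions of small values lie strictly below w, and differ from a
      have hvpos : ∀ v : Fin n, v < i → σ⁻¹ v < w ∧ σ⁻¹ v ≠ a := by
        intro v hv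
        have hσv : σ (σ⁻¹ v) = v := perm_apply_inv_self σ v
        have h1 : σ⁻¹ v ≤ j := F3 _ (by rw [hσv]; exact le_of_lt hv)
        have hvi : σ (σ⁻¹ v) < σ c := by rw [hσv, ← hia]; exact hv
        have hvc : σ⁻¹ v ≠ c := fun h => absurd hvi (by rw [h]; exact lt_irrefl _)
        have hlt_c : σ⁻¹ v < c := lt_of_le_of_ne (hcj' ▸ h1) hvc
        have hvlt_a : σ (σ⁻¹ v) < σ a := lt_trans hvi (lt_trans hcd' hda)
        have hna : σ⁻¹ v ≠ a := fun h => absurd hvlt_a (by rw [h]; exact lt_irrefl _)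
        have hnw : σ⁻¹ v ≠ w := fun h =>
          absurd (lt_trans hvlt_a hσaw) (by rw [h]; exact lt_irrefl _)
        have hnotgt : ¬ (w < σ⁻¹ v) := fun h => absurd (hq _ h hlt_c) (not_le.mpr hvi)
        exact ⟨lt_of_le_of_ne (not_lt.mp hnotgt) hnw, hna⟩
      have hiw : i < w := by
        have hinj : Set.InjOn (fun v => σ⁻¹ v) (Finset.Iio i) :=
          fun x _ y _ h => σ⁻¹.injective h
        have hmaps : ∀ v ∈ Finset.Iio i, σ⁻¹ v ∈ (Finset.Iio w).erase a := by
          intro v hv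
          obtain ⟨h1, h2⟩ := hvpos v (Finset.mem_Iio.mp hv)
          exact Finset.mem_erase.mpr ⟨h2, Finset.mem_Iio.mpr h1⟩
        have hcard := Finset.card_le_card_of_injOn _ hmaps hinj
        rw [Fin.card_Iio] at hcard
        have hcard2 : ((Finset.Iio w).erase a).card = (w : ℕ) - 1 := by
          rw [Finset.card_erase_of_mem (Finset.mem_Iio.mpr haw), Fin.card_Iio]
        rw [hcard2] at hcard
        have haw' : (0:ℕ) < (w:ℕ) := lt_of_le_of_lt (Nat.zero_le _) haw
        rw [Fin.lt_def]
        omega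
      have hwj : w ≤ j := le_of_lt (hcj' ▸ hwc)
      have hσw_lt : σ w < M := F2 w hwj (fun h => absurd (h ▸ hiw) (not_lt.mpr hp0i))
      have hbj : b ≤ j := le_of_lt (hcj' ▸ hbc)
      have hσa_lt : σ a < M := lt_of_lt_of_le hab' (F1 b hbj)
      have hp0a : p0 < a := by
        rcases lt_trichotomy p0 a with h | h | h
        · exact h
        · exfalso; rw [← h, hp0] at hσa_lt; exact lt_irrefl _ hσa_lt
        · exfalso
          have hp0W : p0 ∈ W := by
            rw [hW, Finset.mem_filter]
            exact ⟨Finset.mem_univ _, h, lt_of_le_of_lt hp0i (lt_trans hiw hwc),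
              by rw [hp0]; exact hσa_lt⟩
          exact absurd (Finset.min'_le W p0 hp0W)
            (not_le.mpr (lt_of_le_of_lt hp0i hiw))
      exact h4231 ⟨p0, a, w, d, hp0a, haw, lt_trans hwc hcd,
        hda, hσaw, by rw [hp0]; exact hσw_lt⟩



lemma avoids4231_inv {σ : Equiv.Perm (Fin n)} (h : avoids4231 σ) : avoids4231 σ⁻¹ := by
  rintro ⟨a, b, c, d, h1, h2, h3, h4, h5, h6⟩
  exact h ⟨σ⁻¹ d, σ⁻¹ b, σ⁻¹ c, σ⁻¹ a, h4, h5, h6,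
    by simpa using h1, by simpa using h2, by simpa using h3⟩

theorem avoids4231_not_covexillary (n : ℕ) (σ : Equiv.Perm (Fin n))
    (h1 : avoids4231 σ) (h2 : ¬ covexillary σ) :
    ∃ i : Fin n,
      i < maxS σ i ∧ maxS σ i < maxS σ (maxS σ⁻¹ i) ∧
      i < maxS σ⁻¹ i ∧ maxS σ⁻¹ i < maxS σ⁻¹ (maxS σ i) := by
  rw [covexillary, not_not] at h2
  set O := Finset.univ.filter (fun p : Fin n × Fin n × Fin n × Fin n =>
    p.1 < p.2.1 ∧ p.2.1 < p.2.2.1 ∧ p.2.2.1 < p.2.2.2 ∧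
    σ p.2.2.1 < σ p.2.2.2 ∧ σ p.2.2.2 < σ p.1 ∧ σ p.1 < σ p.2.1) with hO
  have hOne : O.Nonempty := by
    obtain ⟨a, b, c, d, ha, hb, hc, hd, he, hf⟩ := h2
    exact ⟨(a, b, c, d), by simp [hO, ha, hb, hc, hd, he, hf]⟩
  obtain ⟨p, hpO, hpmin⟩ := Finset.exists_min_image O
    (fun p => max p.1 (σ p.2.2.1)) hOne
  obtain ⟨a, b, c, d⟩ := p
  rw [hO, Finset.mem_filter] at hpO
  obtain ⟨-, hab, hbc, hcd, hcd', hda, hab'⟩ := hpO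
  have hmin : ∀ a' b' c' d' : Fin n, a' < b' → b' < c' → c' < d' →
      σ c' < σ d' → σ d' < σ a' → σ a' < σ b' → max a (σ c) ≤ max a' (σ c') := by
    intro a' b' c' d' g1 g2 g3 g4 g5 g6
    exact hpmin (a', b', c', d') (by simp [hO, g1, g2, g3, g4, g5, g6])
  have h4231inv := avoids4231_inv h1
  have hminv : ∀ a' b' c' d' : Fin n, a' < b' → b' < c' → c' < d' →
      σ⁻¹ c' < σ⁻¹ d' → σ⁻¹ d' < σ⁻¹ a' → σ⁻¹ a' < σ⁻¹ b' →
      max (σ c) (σ⁻¹ (σ a)) ≤ max a' (σ⁻¹ c') := by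
    intro a' b' c' d' g1 g2 g3 g4 g5 g6
    have := hmin (σ⁻¹ c') (σ⁻¹ d') (σ⁻¹ a') (σ⁻¹ b') g4 g5 g6
      (by simpa using g1) (by simpa using g2) (by simpa using g3)
    simp only [perm_apply_inv_self] at this
    simp only [perm_inv_apply_self]
    rw [max_comm (σ c) a, max_comm a' (σ⁻¹ c')]
    exact this
  have key1 := key_lemma σ h1 a b c d hab hbc hcd hcd' hda hab' hmin
  have key2 := key_lemma σ⁻¹ h4231inv (σ c) (σ d) (σ a) (σ b) hcd' hda hab'
    (by simpa using hab) (by simpa using hbc) (by simpa using hcd) hminv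
  refine ⟨max a (σ c), key1.1, key1.2, ?_, ?_⟩
  · have := key2.1
    simp only [perm_inv_apply_self] at this
    rwa [max_comm (σ c) a] at this
  · have := key2.2
    simp only [perm_inv_apply_self, inv_inv] at this
    rwa [max_comm (σ c) a] at this

end SmoothPerm
end

section
/- Let σ be the right cyclic shift (12⋯r) in S_r, r > 1. Then the Bruhat interval {τ ∈ S_r : τ ≤ σ} is isomorphic as a poset to the Boolean lattice {0,1}^{r-1}, and the maximal elements strictly below σ are exactly σ T_{i,r} for i ∈ [r-1]. -/
/-!
The interval below `σ = finRotate r` consists of the permutations with `τ x ≤ x + 1` for all `x`.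
Such a permutation cycles consecutive blocks, so it is determined by its excedance set
`{x | x < τ x}`, and every subset of `{0, …, r - 2}` occurs. For `j ≤ i` the rank count
`#{x ≤ i | τ x ≤ j}` is `j` or `j + 1` according to whether `j, …, i` are all excedances, so on
these permutations Bruhat order is inclusion of excedance sets. The coatoms then miss exactly one
excedance `i`, which is the excedance set of `σ (i, r - 1)`.
-/

namespace SmoothPerm

variable {n : ℕ}

open Finset Equiv

section

variable {r : ℕ}

theorem val_add_one_lt_of_lt {x y : Fin r} (h : x < y) : (x : ℕ) + 1 < r := by
  have := y.isLt
  rw [Fin.lt_def] at h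
  omega

theorem card_filter_apply_le (τ : Perm (Fin r)) (j : Fin r) : #{x | τ x ≤ j} = j + 1 := by
  have : ({x | τ x ≤ j} : Finset _) = (Iic j).map τ.symm.toEmbedding := by
    ext x
    simp only [mem_filter, mem_univ, true_and, mem_map_equiv, Equiv.symm_symm, mem_Iic]
  rw [this, card_map, Fin.card_Iic]

theorem card_filter_le_and (P : Fin r → Prop) [DecidablePred P] (x : Fin r) :
    #{y | y ≤ x ∧ P y} = #{y | y < x ∧ P y} + if P x then 1 else 0 := by
  rw [← filter_filter, ← filter_filter, filter_ge_eq_Iic, filter_gt_eq_Iio, ← Iio_insert,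
    filter_insert]
  split_ifs
  · exact card_insert_of_notMem (fun h => (mem_Iio.mp (mem_filter.mp h).1).false)
  · rfl

theorem bruhatLE_antisymm {τ ρ : Perm (Fin r)} (h₁ : bruhatLE τ ρ) (h₂ : bruhatLE ρ τ) :
    τ = ρ := by
  ext x : 1
  induction x using WellFoundedLT.induction with
  | _ x ih =>
  have below_eq : ∀ j, #{y | y < x ∧ τ y ≤ j} = #{y | y < x ∧ ρ y ≤ j} := fun j => by
    congr 1
    exact filter_congr fun y _ => and_congr_right fun hy => by rw [ih y hy]
  have le_iff : ∀ j, τ x ≤ j ↔ ρ x ≤ j := fun j => by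
    have := le_antisymm (h₂ x j) (h₁ x j)
    rw [card_filter_le_and, card_filter_le_and, below_eq] at this
    split_ifs at this <;> first | tauto | omega
  exact le_antisymm ((le_iff _).2 le_rfl) ((le_iff _).1 le_rfl)

def SuccBounded (τ : Perm (Fin r)) : Prop :=
  ∀ x, (τ x : ℕ) ≤ x + 1

namespace SuccBounded

variable {τ ρ : Perm (Fin r)}

theorem val_apply_eq_of_lt_apply (hτ : SuccBounded τ) {x : Fin r} (hx : x < τ x) :
    (τ x : ℕ) = x + 1 :=
  le_antisymm (hτ x) (Fin.lt_def.mp hx)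

/-- `τ` maps `[0, k]` into itself, hence onto itself. -/
theorem le_of_apply_le (hτ : SuccBounded τ) {k x : Fin r} (hk : τ k ≤ k) (hx : τ x ≤ k) :
    x ≤ k := by
  have hsub : ({y | y ≤ k} : Finset (Fin r)) ⊆ ({y | τ y ≤ k} : Finset (Fin r)) := by
    intro y hy
    simp only [mem_filter, mem_univ, true_and] at hy ⊢
    rcases hy.lt_or_eq with hy | rfl
    · have := hτ y
      rw [Fin.lt_def] at hy
      rw [Fin.le_def]
      omega
    · exact hk
  have heq := eq_of_subset_of_card_le hsub
    (by rw [card_filter_apply_le, filter_ge_eq_Iic, Fin.card_Iic])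
  have : x ∈ ({y | τ y ≤ k} : Finset (Fin r)) := by simpa using hx
  rw [← heq] at this
  simpa using this

theorem card_filter_of_lt (hτ : SuccBounded τ) {i j : Fin r} (hij : i < j) :
    #{x | x ≤ i ∧ τ x ≤ j} = i + 1 := by
  rw [← Fin.card_Iic, ← filter_ge_eq_Iic]
  congr 1
  refine filter_congr fun x _ => and_iff_left_of_imp fun hx => ?_
  have := hτ x
  rw [Fin.le_def] at hx ⊢
  rw [Fin.lt_def] at hij
  omega

theorem card_filter_of_le (hτ : SuccBounded τ) {i j : Fin r} (hji : j ≤ i) :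
    #{x | x ≤ i ∧ τ x ≤ j} = if ∀ k, j ≤ k → k ≤ i → k < τ k then (j : ℕ) else j + 1 := by
  have hsplit : #{x | x ≤ i ∧ τ x ≤ j} + #{x | ¬x ≤ i ∧ τ x ≤ j} = j + 1 := by
    have := card_filter_add_card_filter_not (s := ({x | τ x ≤ j} : Finset (Fin r))) (· ≤ i)
    rw [filter_filter, filter_filter, card_filter_apply_le] at this
    simpa only [and_comm] using this
  have escape_le_one : #{x | ¬x ≤ i ∧ τ x ≤ j} ≤ 1 := by
    refine card_le_one.mpr fun a ha b hb => ?_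
    simp only [mem_filter, mem_univ, true_and, not_le] at ha hb
    have key : ∀ {a b : Fin r}, i < a → τ a ≤ j → τ b ≤ j → b ≤ a := fun hia ha hb =>
      hτ.le_of_apply_le (ha.trans (hji.trans hia.le)) (hb.trans (hji.trans hia.le))
    exact le_antisymm (key hb.1 hb.2 ha.2) (key ha.1 ha.2 hb.2)
  split_ifs with hrun
  · have : #{x | x ≤ i ∧ τ x ≤ j} ≤ j := by
      rw [← Fin.card_Iio, ← filter_gt_eq_Iio]
      refine card_le_card fun x hx => ?_
      simp only [mem_filter, mem_univ, true_and] at hx ⊢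
      by_contra hxj
      have := hτ.val_apply_eq_of_lt_apply (hrun x (not_lt.mp hxj) hx.1)
      have := hx.2
      rw [not_lt, Fin.le_def] at hxj
      rw [Fin.le_def] at this
      omega
    omega
  · push Not at hrun
    obtain ⟨k, hjk, hki, hk⟩ := hrun
    have : #{x | ¬x ≤ i ∧ τ x ≤ j} = 0 := by
      refine card_eq_zero.mpr (filter_eq_empty_iff.mpr fun x _ hx => hx.1 ?_)
      exact (hτ.le_of_apply_le hk (hx.2.trans hjk)).trans hki
    omega

theorem bruhatLE_iff (hτ : SuccBounded τ) (hρ : SuccBounded ρ) :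
    bruhatLE τ ρ ↔ ∀ x, x < τ x → x < ρ x := by
  constructor
  · intro h x hx
    by_contra hρx
    have := h x x
    rw [hτ.card_filter_of_le le_rfl, if_pos fun k h₁ h₂ => le_antisymm h₂ h₁ ▸ hx,
      hρ.card_filter_of_le le_rfl, if_neg fun hrun => hρx (hrun x le_rfl le_rfl)] at this
    omega
  · intro h i j
    rcases lt_or_ge i j with hij | hji
    · rw [hτ.card_filter_of_lt hij, ← hρ.card_filter_of_lt hij]
    · rw [hτ.card_filter_of_le hji, hρ.card_filter_of_le hji]
      by_cases hτrun : ∀ k, j ≤ k → k ≤ i → k < τ k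
      · rw [if_pos hτrun, if_pos fun k h₁ h₂ => h k (hτrun k h₁ h₂)]
      · rw [if_neg hτrun]
        split_ifs <;> omega

theorem eq_of_lt_apply_iff (hτ : SuccBounded τ) (hρ : SuccBounded ρ)
    (h : ∀ x, x < τ x ↔ x < ρ x) : τ = ρ :=
  bruhatLE_antisymm ((bruhatLE_iff hτ hρ).2 fun x => (h x).1)
    ((bruhatLE_iff hρ hτ).2 fun x => (h x).2)

theorem of_bruhatLE (hρ : SuccBounded ρ) (h : bruhatLE τ ρ) : SuccBounded τ := by
  intro x
  by_contra! hx
  obtain ⟨j, hj⟩ : ∃ j : Fin r, (j : ℕ) = x + 1 := ⟨⟨x + 1, hx.trans (τ x).isLt⟩, rfl⟩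
  have hρcount := h x j
  rw [hρ.card_filter_of_lt (Fin.lt_def.mpr (by omega))] at hρcount
  have hτcount : #{y | y ≤ x ∧ τ y ≤ j} ≤ x := by
    rw [← Fin.card_Iio, ← filter_gt_eq_Iio]
    refine card_le_card fun y hy => ?_
    simp only [mem_filter, mem_univ, true_and] at hy ⊢
    refine hy.1.lt_of_ne fun hyx => ?_
    have := hy.2
    rw [hyx, Fin.le_def] at this
    omega
  omega

end SuccBounded

theorem val_finRotate (x : Fin r) :
    (finRotate r x : ℕ) = if (x : ℕ) + 1 < r then (x : ℕ) + 1 else 0 := by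
  obtain ⟨n, rfl⟩ : ∃ n, r = n + 1 := ⟨r - 1, by have := x.pos; omega⟩
  rw [coe_finRotate]
  simp only [Fin.ext_iff, Fin.val_last]
  split_ifs <;> omega

theorem succBounded_finRotate : SuccBounded (finRotate r) := fun x => by
  rw [val_finRotate]
  split_ifs <;> omega

theorem lt_finRotate_apply_iff {x : Fin r} : x < finRotate r x ↔ (x : ℕ) + 1 < r := by
  rw [Fin.lt_def, val_finRotate]
  split_ifs <;> omega

theorem bruhatLE_finRotate_iff {τ : Perm (Fin r)} :
    bruhatLE τ (finRotate r) ↔ SuccBounded τ :=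
  ⟨succBounded_finRotate.of_bruhatLE, fun hτ =>
    (hτ.bruhatLE_iff succBounded_finRotate).2 fun _ hx =>
      lt_finRotate_apply_iff.2 (val_add_one_lt_of_lt hx)⟩

/-- The product of the adjacent transpositions `(m m+1)` over the prescribed `m`, taken in
increasing order. -/
theorem exists_succBounded_lt_apply_iff (G : Fin r → Prop) :
    ∃ τ : Perm (Fin r), SuccBounded τ ∧ ∀ x, x < τ x ↔ (x : ℕ) + 1 < r ∧ G x := by
  suffices h : ∀ m < r, ∃ τ : Perm (Fin r), SuccBounded τ ∧ (∀ x : Fin r, m < x → τ x = x) ∧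
      ∀ x, x < τ x ↔ (x : ℕ) < m ∧ G x by
    rcases Nat.eq_zero_or_pos r with rfl | hr
    · exact ⟨1, fun x => x.elim0, fun x => x.elim0⟩
    · obtain ⟨τ, hτ, -, hexc⟩ := h (r - 1) (by omega)
      exact ⟨τ, hτ, fun x => by rw [hexc]; exact and_congr_left fun _ => by omega⟩
  intro m
  induction m with
  | zero => exact fun _ => ⟨1, fun x => by simp, fun x _ => rfl, fun x => by simp⟩
  | succ m ih =>
    intro hm
    obtain ⟨τ, hτ, hfix, hexc⟩ := ih (by omega)
    obtain ⟨a, ha⟩ : ∃ a : Fin r, (a : ℕ) = m := ⟨⟨m, by omega⟩, rfl⟩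
    obtain ⟨b, hb⟩ : ∃ b : Fin r, (b : ℕ) = m + 1 := ⟨⟨m + 1, hm⟩, rfl⟩
    have hτb : τ b = b := hfix b (by omega)
    have hτa : (τ a : ℕ) ≤ m := by
      have := (hexc a).not.mpr (by omega)
      rwa [Fin.lt_def, not_lt, ha] at this
    by_cases hGa : G a
    · refine ⟨τ * swap a b, fun x => ?_, fun x hx => ?_, fun x => ?_⟩ <;>
        rw [Perm.mul_apply, swap_apply_def] <;> simp only [Fin.ext_iff] <;>
        split_ifs with hxa hxb
      -- each of the three properties at `x = m`, at `x = m + 1`, and elsewhere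
      · omega
      · omega
      · exact hτ x
      · omega
      · omega
      · exact congrArg Fin.val (hfix x (by omega))
      · rw [Fin.lt_def]
        exact ⟨fun _ => ⟨by omega, Fin.ext hxa ▸ hGa⟩, fun _ => by omega⟩
      · rw [Fin.lt_def]
        omega
      · rw [hexc]
        exact and_congr_left fun _ => by omega
    · refine ⟨τ, hτ, fun x hx => hfix x (by omega), fun x => ?_⟩
      rw [hexc]
      refine ⟨fun h => ⟨by omega, h.2⟩, fun h => ⟨?_, h.2⟩⟩
      refine lt_of_le_of_ne (Nat.lt_succ_iff.mp h.1) fun hxm => hGa ?_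
      rw [show a = x from Fin.ext (ha.trans hxm.symm)]
      exact h.2

theorem succBounded_finRotate_mul_swap (i : Fin r) {l : Fin r} (hl : (l : ℕ) = r - 1) :
    SuccBounded (finRotate r * swap i l) := fun x => by
  rw [Perm.mul_apply, val_finRotate, swap_apply_def]
  simp only [Fin.ext_iff]
  split_ifs <;> omega

theorem lt_finRotate_mul_swap_apply_iff {i l x : Fin r} (hl : (l : ℕ) = r - 1) :
    x < (finRotate r * swap i l) x ↔ (x : ℕ) + 1 < r ∧ x ≠ i := by
  rw [Perm.mul_apply, swap_apply_def, Fin.lt_def]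
  simp only [Fin.ext_iff]
  split_ifs <;> simp only [val_finRotate] <;> split_ifs <;> omega

/-- The excedance set of `τ` as a bit vector; `r - 1` bits suffice since `r - 1` is never an
excedance. -/
def excedanceCode (τ : Perm (Fin r)) : Fin (r - 1) → Bool :=
  fun i => decide (Fin.castLE (r.sub_le 1) i < τ (Fin.castLE (r.sub_le 1) i))

theorem excedanceCode_le_iff {τ ρ : Perm (Fin r)} :
    excedanceCode τ ≤ excedanceCode ρ ↔ ∀ x, x < τ x → x < ρ x := by
  simp only [Pi.le_def, excedanceCode, Bool.le_iff_imp, decide_eq_true_eq]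
  refine ⟨fun h x hx => ?_, fun h i => h _⟩
  have := h ⟨x, by have := val_add_one_lt_of_lt hx; omega⟩
  exact this hx

theorem exists_succBounded_excedanceCode_eq (g : Fin (r - 1) → Bool) :
    ∃ τ : Perm (Fin r), SuccBounded τ ∧ excedanceCode τ = g := by
  obtain ⟨τ, hτ, hexc⟩ := exists_succBounded_lt_apply_iff fun x => ∃ h : (x : ℕ) < r - 1, g ⟨x, h⟩
  refine ⟨τ, hτ, funext fun i => ?_⟩
  have := hexc (Fin.castLE (r.sub_le 1) i)
  have hi : (i : ℕ) + 1 < r := by omega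
  simp [excedanceCode, this, hi, i.isLt]

theorem exists_eq_finRotate_mul_swap_of_maximal {τ : Perm (Fin r)} {l : Fin r}
    (hl : (l : ℕ) = r - 1) (hτσ : bruhatLE τ (finRotate r)) (hne : τ ≠ finRotate r)
    (hmax : ∀ ρ, bruhatLE τ ρ → bruhatLE ρ (finRotate r) → ρ = τ ∨ ρ = finRotate r) :
    ∃ i : Fin r, (i : ℕ) < r - 1 ∧ τ = finRotate r * swap i l := by
  have hτ := bruhatLE_finRotate_iff.1 hτσ
  obtain ⟨i, hi, hτi⟩ : ∃ i : Fin r, (i : ℕ) + 1 < r ∧ ¬i < τ i := by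
    by_contra! h
    refine hne (hτ.eq_of_lt_apply_iff succBounded_finRotate fun x => ?_)
    rw [lt_finRotate_apply_iff]
    exact ⟨val_add_one_lt_of_lt, h x⟩
  obtain ⟨ρ, hρ, hρexc⟩ := exists_succBounded_lt_apply_iff fun x => x < τ x ∨ x = i
  have hτρ : bruhatLE τ ρ :=
    (hτ.bruhatLE_iff hρ).2 fun x hx => (hρexc x).2 ⟨val_add_one_lt_of_lt hx, .inl hx⟩
  have hρσ : ρ = finRotate r := by
    refine (hmax ρ hτρ (bruhatLE_finRotate_iff.2 hρ)).resolve_left fun h => hτi ?_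
    exact h ▸ (hρexc i).2 ⟨hi, .inr rfl⟩
  refine ⟨i, by omega, hτ.eq_of_lt_apply_iff (succBounded_finRotate_mul_swap i hl) fun x => ?_⟩
  rw [lt_finRotate_mul_swap_apply_iff hl]
  refine ⟨fun hx => ⟨val_add_one_lt_of_lt hx, fun hxi => hτi (hxi ▸ hx)⟩, fun ⟨hx, hxi⟩ => ?_⟩
  have := lt_finRotate_apply_iff.2 hx
  rw [← hρσ, hρexc] at this
  exact this.2.resolve_right hxi

theorem finRotate_mul_swap_maximal {i l : Fin r} (hl : (l : ℕ) = r - 1) (hi : (i : ℕ) < r - 1) :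
    bruhatLE (finRotate r * swap i l) (finRotate r) ∧ finRotate r * swap i l ≠ finRotate r ∧
      ∀ ρ, bruhatLE (finRotate r * swap i l) ρ → bruhatLE ρ (finRotate r) →
        ρ = finRotate r * swap i l ∨ ρ = finRotate r := by
  have hc := succBounded_finRotate_mul_swap i hl
  refine ⟨bruhatLE_finRotate_iff.2 hc, fun h => ?_, fun ρ hcρ hρσ => ?_⟩
  · have := (lt_finRotate_mul_swap_apply_iff (i := i) (x := i) hl).1
    rw [h] at this
    exact (this (lt_finRotate_apply_iff.2 (by omega))).2 rfl
  have hρ := bruhatLE_finRotate_iff.1 hρσ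
  rw [hc.bruhatLE_iff hρ] at hcρ
  by_cases hρi : i < ρ i
  · refine .inr (hρ.eq_of_lt_apply_iff succBounded_finRotate fun x => ?_)
    rw [lt_finRotate_apply_iff]
    refine ⟨val_add_one_lt_of_lt, fun hx => ?_⟩
    rcases eq_or_ne x i with rfl | hxi
    · exact hρi
    · exact hcρ x ((lt_finRotate_mul_swap_apply_iff hl).2 ⟨hx, hxi⟩)
  · refine .inl (hρ.eq_of_lt_apply_iff hc fun x => ?_)
    rw [lt_finRotate_mul_swap_apply_iff hl]
    exact ⟨fun hx => ⟨val_add_one_lt_of_lt hx, fun hxi => hρi (hxi ▸ hx)⟩,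
      fun h => hcρ x ((lt_finRotate_mul_swap_apply_iff hl).2 h)⟩

end

theorem coxeter_interval_boolean (r : ℕ) (hr : 1 < r) :
    (∃ e : {τ : Equiv.Perm (Fin r) // bruhatLE τ (finRotate r)} ≃ (Fin (r - 1) → Bool),
      ∀ a b, bruhatLE a.1 b.1 ↔ e a ≤ e b) ∧
    (∀ τ : Equiv.Perm (Fin r),
      (bruhatLE τ (finRotate r) ∧ τ ≠ finRotate r ∧
        ∀ ρ : Equiv.Perm (Fin r), bruhatLE τ ρ → bruhatLE ρ (finRotate r) →
          ρ = τ ∨ ρ = finRotate r) ↔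
      (∃ i : Fin r, (i : ℕ) < r - 1 ∧
        τ = finRotate r * Equiv.swap i ⟨r - 1, by omega⟩)) := by
  let e : {τ : Perm (Fin r) // bruhatLE τ (finRotate r)} → (Fin (r - 1) → Bool) :=
    fun τ => excedanceCode τ.1
  have he : ∀ a b, bruhatLE a.1 b.1 ↔ e a ≤ e b := fun a b => by
    rw [excedanceCode_le_iff, SuccBounded.bruhatLE_iff (bruhatLE_finRotate_iff.1 a.2)
      (bruhatLE_finRotate_iff.1 b.2)]
  have e_injective : Function.Injective e := fun a b hab =>
    Subtype.ext (bruhatLE_antisymm ((he a b).2 hab.le) ((he b a).2 hab.ge))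
  have e_surjective : Function.Surjective e := fun g => by
    obtain ⟨τ, hτ, hg⟩ := exists_succBounded_excedanceCode_eq g
    exact ⟨⟨τ, bruhatLE_finRotate_iff.2 hτ⟩, hg⟩
  refine ⟨⟨.ofBijective e ⟨e_injective, e_surjective⟩, he⟩, fun τ => ⟨?_, ?_⟩⟩
  · exact fun ⟨hτσ, hne, hmax⟩ => exists_eq_finRotate_mul_swap_of_maximal rfl hτσ hne hmax
  · rintro ⟨i, hi, rfl⟩
    exact finRotate_mul_swap_maximal rfl hi

end SmoothPerm
end

section
/- If τ ∈ S_n is covexillary but not smooth, then there exist indices i < j < k < l with τ(l) < τ(j) < τ(k) < τ(i) such that τ T_{j,k} is covexillary. -/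
namespace SmoothPerm

variable {n : ℕ}

private lemma swap_good {n : ℕ} {p : Equiv.Perm (Fin n)}
    (hp : ∀ a b c d : Fin n, a < b → b < c → c < d →
      p c < p d → p d < p a → p a < p b → False)
    {J K : Fin n} (hJK : J < K) (hUV : p J < p K)
    (tight : ∀ m, J < m → m < K → p m < p J ∨ p K < p m)
    (nT1 : ∀ x m, x < J → p J < p x → p x < p K → J < m → m < K → p m < p J → False)
    (nT2 : ∀ m y, J < m → m < K → p K < p m → K < y → p J < p y → p y < p K → False)
    (nT7 : ∀ h m, J < h → h < m → m < K → p K < p h → p m < p J → False)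
    (nT8 : ∀ x y, x < J → K < y → p J < p y → p y < p x → p x < p K → False) :
    ¬ ∃ a b c d : Fin n, a < b ∧ b < c ∧ c < d ∧
      (p * Equiv.swap J K) c < (p * Equiv.swap J K) d ∧
      (p * Equiv.swap J K) d < (p * Equiv.swap J K) a ∧
      (p * Equiv.swap J K) a < (p * Equiv.swap J K) b := by
  have hwJ : (p * Equiv.swap J K) J = p K := by
    rw [Equiv.Perm.mul_apply, Equiv.swap_apply_left]
  have hwK : (p * Equiv.swap J K) K = p J := by
    rw [Equiv.Perm.mul_apply, Equiv.swap_apply_right]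
  have hw : ∀ x, x ≠ J → x ≠ K → (p * Equiv.swap J K) x = p x := fun x h1 h2 => by
    rw [Equiv.Perm.mul_apply, Equiv.swap_apply_of_ne_of_ne h1 h2]
  have tri : ∀ x y : Fin n, x ≠ y → p x < p y ∨ p y < p x :=
    fun x y hxy => lt_or_gt_of_ne fun h => hxy (p.injective h)
  rintro ⟨a, b, c, d, hab, hbc, hcd, h1, h2, h3⟩
  rcases eq_or_ne a J with rfl | haJ
  · -- J = a
    have hbJ : b ≠ a := ne_of_gt hab
    have hcJ : c ≠ a := ne_of_gt (hab.trans hbc)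
    have hdJ : d ≠ a := ne_of_gt ((hab.trans hbc).trans hcd)
    rcases eq_or_ne b K with rfl | hbK
    · -- K = b
      rw [hwJ, hwK] at h3
      exact absurd h3 (not_lt.2 hUV.le)
    · rcases eq_or_ne c K with rfl | hcK
      · -- K = c
        have hdK : d ≠ c := ne_of_gt hcd
        rw [hwK, hw d hdJ hdK] at h1
        rw [hw d hdJ hdK, hwJ] at h2
        rw [hwJ, hw b hbJ hbK] at h3
        exact nT2 b d hab hbc h3 hcd h1 h2
      · rcases eq_or_ne d K with rfl | hdK
        · -- K = d
          have hcK : c ≠ d := ne_of_lt hcd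
          rw [hw c hcJ hcK, hwK] at h1
          rw [hwJ, hw b hbJ hbK] at h3
          exact nT7 b c hab hbc hcd h3 h1
        · -- K not in pattern
          rw [hw c hcJ hcK, hw d hdJ hdK] at h1
          rw [hw d hdJ hdK, hwJ] at h2
          rw [hwJ, hw b hbJ hbK] at h3
          rcases lt_or_gt_of_ne hbK with hbK' | hbK'
          · rcases lt_or_gt_of_ne hcK with hcK' | hcK'
            · have hc : p c < p a :=
                (tight c (hab.trans hbc) hcK').resolve_right
                  (not_lt.2 (h1.trans h2).le)
              exact nT7 b c hab hbc hcK' h3 hc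
            · rcases tri a d (Ne.symm hdJ) with hd | hd
              · exact nT2 b d hab hbK' h3 (hcK'.trans hcd) hd h2
              · exact hp a b c d hab hbc hcd h1 hd (hUV.trans h3)
          · exact hp K b c d hbK' hbc hcd h1 h2 h3
  · rcases eq_or_ne b J with rfl | hbJ
    · -- J = b
      have hcJ : c ≠ b := ne_of_gt hbc
      have hdJ : d ≠ b := ne_of_gt (hbc.trans hcd)
      have haK : a ≠ K := ne_of_lt (hab.trans hJK)
      rcases eq_or_ne c K with rfl | hcK
      · -- K = c
        have hdK : d ≠ c := ne_of_gt hcd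
        rw [hwK, hw d hdJ hdK] at h1
        rw [hw d hdJ hdK, hw a haJ haK] at h2
        rw [hw a haJ haK, hwJ] at h3
        exact nT8 a d hab hcd h1 h2 h3
      · rcases eq_or_ne d K with rfl | hdK
        · -- K = d
          have hcK : c ≠ d := ne_of_lt hcd
          rw [hw c hcJ hcK, hwK] at h1
          rw [hwK, hw a haJ haK] at h2
          rw [hw a haJ haK, hwJ] at h3
          exact nT1 a c hab h2 h3 hbc hcd h1
        · rw [hw c hcJ hcK, hw d hdJ hdK] at h1
          rw [hw d hdJ hdK, hw a haJ haK] at h2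
          rw [hw a haJ haK, hwJ] at h3
          rcases tri a b haJ with ha | ha
          · exact hp a b c d hab hbc hcd h1 h2 ha
          · rcases lt_or_gt_of_ne hcK with hcK' | hcK'
            · have hc : p c < p b :=
                (tight c hbc hcK').resolve_right
                  (not_lt.2 ((h1.trans h2).trans h3).le)
              exact nT1 a c hab ha h3 hbc hcK' hc
            · exact hp a K c d (hab.trans hJK) hcK' hcd h1 h2 h3
    · rcases eq_or_ne c J with rfl | hcJ
      · -- J = c
        have haK : a ≠ K := ne_of_lt ((hab.trans hbc).trans hJK)
        have hbK : b ≠ K := ne_of_lt (hbc.trans hJK)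
        rcases eq_or_ne d K with rfl | hdK
        · rw [hwJ, hwK] at h1
          exact absurd h1 (not_lt.2 hUV.le)
        · have hdJ : d ≠ c := ne_of_gt hcd
          rw [hwJ, hw d hdJ hdK] at h1
          rw [hw d hdJ hdK, hw a haJ haK] at h2
          rw [hw a haJ haK, hw b hbJ hbK] at h3
          exact hp a b c d hab hbc hcd (hUV.trans h1) h2 h3
      · rcases eq_or_ne d J with rfl | hdJ
        · -- J = d
          have haK : a ≠ K := ne_of_lt ((hab.trans (hbc.trans hcd)).trans hJK)
          have hbK : b ≠ K := ne_of_lt ((hbc.trans hcd).trans hJK)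
          have hcK : c ≠ K := ne_of_lt (hcd.trans hJK)
          have haD : a ≠ d := ne_of_lt (hab.trans (hbc.trans hcd))
          have hbD : b ≠ d := ne_of_lt (hbc.trans hcd)
          have hcD : c ≠ d := ne_of_lt hcd
          rw [hw c hcD hcK, hwJ] at h1
          rw [hwJ, hw a haD haK] at h2
          rw [hw a haD haK, hw b hbD hbK] at h3
          exact hp a b c K hab hbc (hcd.trans hJK) h1 h2 h3
        · -- J not in pattern
          rcases eq_or_ne a K with rfl | haK
          · -- K = a
            have hbK : b ≠ a := ne_of_gt hab
            have hcK : c ≠ a := ne_of_gt (hab.trans hbc)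
            have hdK : d ≠ a := ne_of_gt ((hab.trans hbc).trans hcd)
            rw [hw c hcJ hcK, hw d hdJ hdK] at h1
            rw [hw d hdJ hdK, hwK] at h2
            rw [hwK, hw b hbJ hbK] at h3
            exact hp J b c d (hJK.trans hab) hbc hcd h1 h2 h3
          · rcases eq_or_ne b K with rfl | hbK
            · -- K = b
              have hcK : c ≠ b := ne_of_gt hbc
              have hdK : d ≠ b := ne_of_gt (hbc.trans hcd)
              rw [hw c hcJ hcK, hw d hdJ hdK] at h1
              rw [hw d hdJ hdK, hw a haJ (ne_of_lt hab)] at h2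
              rw [hw a haJ (ne_of_lt hab), hwK] at h3
              exact hp a b c d hab hbc hcd h1 h2 (h3.trans hUV)
            · rcases eq_or_ne c K with rfl | hcK
              · -- K = c
                have hdK : d ≠ c := ne_of_gt hcd
                have haC : a ≠ c := ne_of_lt (hab.trans hbc)
                have hbC : b ≠ c := ne_of_lt hbc
                rw [hwK, hw d hdJ hdK] at h1
                rw [hw d hdJ hdK, hw a haJ haC] at h2
                rw [hw a haJ haC, hw b hbJ hbC] at h3
                rcases tri c d (ne_of_lt hcd) with hd | hd
                · exact hp a b c d hab hbc hcd hd h2 h3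
                · rcases lt_or_gt_of_ne haJ with haJ' | haJ'
                  · rcases tri a c haC with ha | ha
                    · exact nT8 a d haJ' hcd h1 h2 ha
                    · rcases lt_or_gt_of_ne hbJ with hbJ' | hbJ'
                      · exact hp a b J d hab hbJ' (hJK.trans hcd) h1 h2 h3
                      · exact nT2 b d hbJ' hbc (ha.trans h3) hcd h1 hd
                  · have hKa : p c < p a :=
                      (tight a haJ' (hab.trans hbc)).resolve_left
                        (not_lt.2 (h1.trans h2).le)
                    exact nT2 b d (haJ'.trans hab) hbc (hKa.trans h3) hcd h1 hd
              · rcases eq_or_ne d K with rfl | hdK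
                · -- K = d
                  have haD : a ≠ d := ne_of_lt (hab.trans (hbc.trans hcd))
                  have hbD : b ≠ d := ne_of_lt (hbc.trans hcd)
                  have hcD : c ≠ d := ne_of_lt hcd
                  rw [hw c hcJ hcD, hwK] at h1
                  rw [hwK, hw a haJ haD] at h2
                  rw [hw a haJ haD, hw b hbJ hbD] at h3
                  rcases tri a d haD with ha | ha
                  · rcases lt_or_gt_of_ne haJ with haJ' | haJ'
                    · rcases lt_or_gt_of_ne hcJ with hcJ' | hcJ'
                      · exact hp a b c J hab hbc hcJ' h1 h2 h3
                      · exact nT1 a c haJ' h2 ha hcJ' hcd h1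
                    · rcases tight a haJ' (hab.trans (hbc.trans hcd)) with h | h
                      · exact absurd h2 (not_lt.2 h.le)
                      · exact absurd ha (not_lt.2 h.le)
                  · exact hp a b c d hab hbc hcd (h1.trans hUV) ha h3
                · rw [hw c hcJ hcK, hw d hdJ hdK] at h1
                  rw [hw d hdJ hdK, hw a haJ haK] at h2
                  rw [hw a haJ haK, hw b hbJ hbK] at h3
                  exact hp a b c d hab hbc hcd h1 h2 h3

theorem covexillary_not_smooth_step (n : ℕ) (τ : Equiv.Perm (Fin n))
    (hc : covexillary τ) (hns : ¬ (avoids4231 τ ∧ covexillary τ)) :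
    ∃ i j k l : Fin n, i < j ∧ j < k ∧ k < l ∧
      τ l < τ j ∧ τ j < τ k ∧ τ k < τ i ∧
      covexillary (τ * Equiv.swap j k) := by
  classical
  have hp : ∀ a b c d : Fin n, a < b → b < c → c < d →
      τ c < τ d → τ d < τ a → τ a < τ b → False := by
    intro a b c d h1 h2 h3 h4 h5 h6
    exact hc ⟨a, b, c, d, h1, h2, h3, h4, h5, h6⟩
  have tri : ∀ x y : Fin n, x ≠ y → τ x < τ y ∨ τ y < τ x :=
    fun x y hxy => lt_or_gt_of_ne fun h => hxy (τ.injective h)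
  have h4231 : ∃ a b c d : Fin n, a < b ∧ b < c ∧ c < d ∧
      τ d < τ b ∧ τ b < τ c ∧ τ c < τ a := by
    by_contra h
    exact hns ⟨h, hc⟩
  obtain ⟨a0, b0, c0, d0, hab0, hbc0, hcd0, v1, v2, v3⟩ := h4231
  have hE : ∃ m : ℕ, ∃ jk : Fin n × Fin n,
      (jk.1 < jk.2 ∧ τ jk.1 < τ jk.2 ∧ (∃ i, i < jk.1 ∧ τ jk.2 < τ i) ∧
        (∃ l, jk.2 < l ∧ τ l < τ jk.1)) ∧ ((τ jk.2 : ℕ) - (τ jk.1 : ℕ)) = m :=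
    ⟨_, (b0, c0), ⟨hbc0, v2, ⟨a0, hab0, v3⟩, ⟨d0, hcd0, v1⟩⟩, rfl⟩
  obtain ⟨⟨j, k⟩, ⟨hjk1, hjk2, ⟨i0, hi0, hi0v⟩, ⟨l0, hl0, hl0v⟩⟩, hmval⟩ :=
    Nat.find_spec hE
  have hmin : ∀ (j' k' : Fin n), j' < k' → τ j' < τ k' →
      (∃ i, i < j' ∧ τ k' < τ i) → (∃ l, k' < l ∧ τ l < τ j') →
      (τ k : ℕ) - (τ j : ℕ) ≤ (τ k' : ℕ) - (τ j' : ℕ) := by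
    intro j' k' h1 h2 h3 h4
    rw [hmval]
    exact Nat.find_min' hE ⟨(j', k'), ⟨h1, h2, h3, h4⟩, rfl⟩
  -- no extendable (x,k) with τ j < τ x (would decrease the value gap)
  have hAK : ∀ x, x < j → τ j < τ x → τ x < τ k → ¬ ∃ i', i' < x ∧ τ k < τ i' := by
    intro x h1 h2 h3 hex
    have hm := hmin x k (h1.trans hjk1) h3 hex ⟨l0, hl0, hl0v.trans h2⟩
    have e1 : ((τ j : Fin n) : ℕ) < ((τ x : Fin n) : ℕ) := h2
    have e2 : ((τ x : Fin n) : ℕ) < ((τ k : Fin n) : ℕ) := h3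
    omega
  -- no extendable (j,y) with τ y < τ k
  have hJD : ∀ y, k < y → τ j < τ y → τ y < τ k → ¬ ∃ l', y < l' ∧ τ l' < τ j := by
    intro y h1 h2 h3 hex
    have hm := hmin j y (hjk1.trans h1) h2 ⟨i0, hi0, h3.trans hi0v⟩ hex
    have e1 : ((τ j : Fin n) : ℕ) < ((τ y : Fin n) : ℕ) := h2
    have e2 : ((τ y : Fin n) : ℕ) < ((τ k : Fin n) : ℕ) := h3
    omega
  have tight : ∀ m, j < m → m < k → τ m < τ j ∨ τ k < τ m := by
    intro m h1 h2
    by_contra hcon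
    push_neg at hcon
    obtain ⟨hA, hB⟩ := hcon
    have hjm : τ j < τ m :=
      lt_of_le_of_ne hA fun e => (ne_of_lt h1) (τ.injective e.symm).symm
    have hmk : τ m < τ k :=
      lt_of_le_of_ne hB fun e => (ne_of_lt h2) (τ.injective e.symm).symm
    have hm := hmin j m h1 hjm ⟨i0, hi0, hmk.trans hi0v⟩ ⟨l0, h2.trans hl0, hl0v⟩
    have e1 : ((τ j : Fin n) : ℕ) < ((τ m : Fin n) : ℕ) := hjm
    have e2 : ((τ m : Fin n) : ℕ) < ((τ k : Fin n) : ℕ) := hmk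
    omega
  -- F2 : no T8 configuration
  have nT8 : ∀ x y, x < j → k < y → τ j < τ y → τ y < τ x → τ x < τ k → False := by
    intro x y hxj hky hjy hyx hxk
    by_cases hx : ∃ i', i' < x ∧ τ k < τ i'
    · exact hAK x hxj (hjy.trans hyx) hxk hx
    · have hxi : x < i0 := by
        rcases lt_trichotomy i0 x with h | h | h
        · exact absurd ⟨i0, h, hi0v⟩ hx
        · exact absurd (h ▸ hi0v) (not_lt.2 hxk.le)
        · exact h
      exact hp x i0 j y hxi hi0 (hjk1.trans hky) hjy hyx (hxk.trans hi0v)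
  -- core construction 1 : pair (c, k)
  have core1 : ∀ c : Fin n, j < c → c < k → τ c < τ j →
      (∀ m, j < m → m < k → τ m < τ j → m ≤ c) →
      (∀ y, k < y → τ y < τ j → τ y < τ c) →
      (∀ m y, c < m → m < k → τ k < τ m → k < y → τ c < τ y → τ y < τ k → False) →
      ∃ i j' k' l : Fin n, i < j' ∧ j' < k' ∧ k' < l ∧
        τ l < τ j' ∧ τ j' < τ k' ∧ τ k' < τ i ∧
        covexillary (τ * Equiv.swap j' k') := by
    intro c hjc hck hcj hcmax hB1a hH'
    refine ⟨i0, c, k, l0, hi0.trans hjc, hck, hl0,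
      hB1a l0 hl0 hl0v, hcj.trans hjk2, hi0v, ?_⟩
    refine swap_good hp hck (hcj.trans hjk2) ?_ ?_ ?_ ?_ ?_
    · intro m hcm hmk
      rcases tight m (hjc.trans hcm) hmk with h | h
      · exact absurd (hcmax m (hjc.trans hcm) hmk h) (not_le.2 hcm)
      · exact Or.inr h
    · intro x m _ _ _ hcm hmk hmc
      exact absurd (hcmax m (hjc.trans hcm) hmk (hmc.trans hcj)) (not_le.2 hcm)
    · exact hH'
    · intro h m hch hhm hmk _ hmc
      exact absurd (hcmax m (hjc.trans (hch.trans hhm)) hmk (hmc.trans hcj))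
        (not_le.2 (hch.trans hhm))
    · intro x y hxc hky hcy hyx hxk
      rcases tri y j (ne_of_gt (hjk1.trans hky)) with h | h
      · exact absurd (hB1a y hky h) (not_lt.2 hcy.le)
      · have hxj : x ≠ j := fun e => lt_irrefl _ (e ▸ (h.trans hyx) : τ j < τ j)
        rcases lt_or_gt_of_ne hxj with hx | hx
        · exact nT8 x y hx hky h hyx hxk
        · rcases tight x hx (hxc.trans hck) with hh | hh
          · exact absurd (h.trans hyx) (not_lt.2 hh.le)
          · exact absurd hxk (not_lt.2 hh.le)
  -- core construction 2 : pair (j, b)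
  have core2 : ∀ b : Fin n, j < b → b < k → τ k < τ b →
      (∀ m, j < m → m < k → τ k < τ m → b ≤ m) →
      (∀ x, x < j → τ k < τ x → τ b < τ x) →
      (∀ x m, x < j → τ j < τ x → τ x < τ b → j < m → m < b → τ m < τ j → False) →
      ∃ i j' k' l : Fin n, i < j' ∧ j' < k' ∧ k' < l ∧
        τ l < τ j' ∧ τ j' < τ k' ∧ τ k' < τ i ∧
        covexillary (τ * Equiv.swap j' k') := by
    intro b hjb hbk hkb hbmin hB2a hN1
    refine ⟨i0, j, b, l0, hi0, hjb, hbk.trans hl0,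
      hl0v, hjk2.trans hkb, hB2a i0 hi0 hi0v, ?_⟩
    refine swap_good hp hjb (hjk2.trans hkb) ?_ ?_ ?_ ?_ ?_
    · intro m hjm hmb
      rcases tight m hjm (hmb.trans hbk) with h | h
      · exact Or.inl h
      · exact absurd (hbmin m hjm (hmb.trans hbk) h) (not_le.2 hmb)
    · exact hN1
    · intro m y hjm hmb hbm _ _ _
      exact absurd (hbmin m hjm (hmb.trans hbk) (hkb.trans hbm)) (not_le.2 hmb)
    · intro h m hjh hhm hmb hbh _
      exact absurd (hbmin h hjh ((hhm.trans hmb).trans hbk) (hkb.trans hbh))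
        (not_le.2 (hhm.trans hmb))
    · intro x y hxj hby hjy hyx hxb
      rcases tri x k (ne_of_lt (hxj.trans hjk1)) with h | h
      · have hyk : y ≠ k := fun e => lt_irrefl _ ((e ▸ hyx).trans h : τ k < τ k)
        rcases lt_or_gt_of_ne hyk with hy | hy
        · rcases tight y (hjb.trans hby) hy with hh | hh
          · exact absurd hjy (not_lt.2 hh.le)
          · exact absurd (hyx.trans h) (not_lt.2 hh.le)
        · exact nT8 x y hxj hy hjy hyx h
      · exact absurd hxb (not_lt.2 (hB2a x hxj h).le)
  -- T1 / T2 case split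
  by_cases hT1 : ∃ x m, x < j ∧ τ j < τ x ∧ τ x < τ k ∧ j < m ∧ m < k ∧ τ m < τ j
  · -- T1 holds; choose c = rightmost inner-low
    obtain ⟨a1, m1, ha1, hja1, ha1k, hjm1, hm1k, hm1j⟩ := hT1
    have hSne : (Finset.univ.filter
        (fun m => j < m ∧ m < k ∧ τ m < τ j)).Nonempty :=
      ⟨m1, Finset.mem_filter.2 ⟨Finset.mem_univ _, hjm1, hm1k, hm1j⟩⟩
    set c := (Finset.univ.filter (fun m => j < m ∧ m < k ∧ τ m < τ j)).max' hSne
      with hcdef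
    obtain ⟨-, hjc, hck, hcj⟩ := Finset.mem_filter.1
      ((Finset.univ.filter (fun m => j < m ∧ m < k ∧ τ m < τ j)).max'_mem hSne)
    have hcmax : ∀ m, j < m → m < k → τ m < τ j → m ≤ c := fun m h1 h2 h3 =>
      Finset.le_max' _ m (Finset.mem_filter.2 ⟨Finset.mem_univ _, h1, h2, h3⟩)
    -- B1a via T1 : every low right of k is below τ c
    have hai : a1 < i0 := by
      rcases lt_trichotomy i0 a1 with h | h | h
      · exact absurd ⟨i0, h, hi0v⟩ (hAK a1 ha1 hja1 ha1k)
      · exact absurd (h ▸ hi0v) (not_lt.2 ha1k.le)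
      · exact h
    have hB1a : ∀ y, k < y → τ y < τ j → τ y < τ c := by
      intro y hky hyj
      rcases tri y c (ne_of_gt (hck.trans hky)) with h | h
      · exact h
      · exact absurd (hp a1 i0 c y hai (hi0.trans hjc) (hck.trans hky) h
          (hyj.trans hja1) (ha1k.trans hi0v)) id
    by_cases hT2 : ∃ m y, j < m ∧ m < k ∧ τ k < τ m ∧ k < y ∧ τ j < τ y ∧ τ y < τ k
    · -- case 3 : T1 and T2
      obtain ⟨m2, d2, hjm2, hm2k, hkm2, hkd2, hjd2, hd2k⟩ := hT2
      have hld : l0 < d2 := by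
        rcases lt_trichotomy d2 l0 with h | h | h
        · exact absurd ⟨l0, h, hl0v⟩ (hJD d2 hkd2 hjd2 hd2k)
        · exact absurd hl0v (by rw [← h]; exact not_lt.2 (hjd2.le))
        · exact h
      by_cases h3a : ∃ h', c < h' ∧ h' < k ∧ τ k < τ h'
      · -- case 3a : pair (c, h1)
        obtain ⟨h0, hch0, hh0k, hkh0⟩ := h3a
        have hHne : (Finset.univ.filter
            (fun m => c < m ∧ m < k ∧ τ k < τ m)).Nonempty :=
          ⟨h0, Finset.mem_filter.2 ⟨Finset.mem_univ _, hch0, hh0k, hkh0⟩⟩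
        set h1 := (Finset.univ.filter (fun m => c < m ∧ m < k ∧ τ k < τ m)).min' hHne
          with hh1def
        obtain ⟨-, hch1, hh1k, hkh1⟩ := Finset.mem_filter.1
          ((Finset.univ.filter (fun m => c < m ∧ m < k ∧ τ k < τ m)).min'_mem hHne)
        have hh1min : ∀ m, c < m → m < k → τ k < τ m → h1 ≤ m := fun m ha hb hcc =>
          Finset.min'_le _ m (Finset.mem_filter.2 ⟨Finset.mem_univ _, ha, hb, hcc⟩)
        -- no value in (τ k, τ h1) sits left of c
        have noMidHigh : ∀ x, x < c → τ k < τ x → τ h1 < τ x := by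
          intro x hxc hkx
          rcases tri x h1 (ne_of_lt (hxc.trans hch1)) with h | h
          · exact absurd (hp x h1 l0 d2 (hxc.trans hch1) (hh1k.trans hl0) hld
              (hl0v.trans hjd2) (hd2k.trans hkx) h) id
          · exact h
        refine ⟨i0, c, h1, l0, hi0.trans hjc, hch1, hh1k.trans hl0,
          hB1a l0 hl0 hl0v, (hcj.trans hjk2).trans hkh1,
          noMidHigh i0 (hi0.trans hjc) hi0v, ?_⟩
        refine swap_good hp hch1 ((hcj.trans hjk2).trans hkh1) ?_ ?_ ?_ ?_ ?_
        · intro m hcm hmh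
          rcases tight m (hjc.trans hcm) (hmh.trans hh1k) with h | h
          · exact absurd (hcmax m (hjc.trans hcm) (hmh.trans hh1k) h) (not_le.2 hcm)
          · exact absurd (hh1min m hcm (hmh.trans hh1k) h) (not_le.2 hmh)
        · intro x m _ _ _ hcm hmh hmc
          exact absurd (hcmax m (hjc.trans hcm) (hmh.trans hh1k) (hmc.trans hcj))
            (not_le.2 hcm)
        · intro m y hcm hmh hhm _ _ _
          exact absurd (hh1min m hcm (hmh.trans hh1k) (hkh1.trans hhm)) (not_le.2 hmh)
        · intro h m hch hhm hmh _ hmc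
          exact absurd (hcmax m (hjc.trans (hch.trans hhm)) (hmh.trans hh1k)
            (hmc.trans hcj)) (not_le.2 (hch.trans hhm))
        · intro x y hxc hh1y hcy hyx hxh1
          rcases lt_trichotomy y k with hyk' | rfl | hyk'
          · rcases tight y (hjc.trans (hch1.trans hh1y)) hyk' with h | h
            · exact absurd (hcmax y (hjc.trans (hch1.trans hh1y)) hyk' h)
                (not_le.2 (hch1.trans hh1y))
            · exact absurd (noMidHigh x hxc (h.trans hyx)) (not_lt.2 hxh1.le)
          · exact absurd (noMidHigh x hxc hyx) (not_lt.2 hxh1.le)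
          · rcases tri y j (ne_of_gt (hjk1.trans hyk')) with h | h
            · exact absurd (hB1a y hyk' h) (not_lt.2 hcy.le)
            · rcases tri y k (ne_of_gt hyk') with hh | hh
              · rcases tri x k (ne_of_lt (hxc.trans hck)) with h3 | h3
                · have hxj : x ≠ j := fun e => lt_irrefl _ (e ▸ (h.trans hyx) : τ j < τ j)
                  rcases lt_or_gt_of_ne hxj with hx | hx
                  · exact nT8 x y hx hyk' h hyx h3
                  · rcases tight x hx (hxc.trans hck) with h4 | h4
                    · exact absurd (h.trans hyx) (not_lt.2 h4.le)
                    · exact absurd h3 (not_lt.2 h4.le)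
                · exact absurd (noMidHigh x hxc h3) (not_lt.2 hxh1.le)
              · exact absurd (noMidHigh x hxc (hh.trans hyx)) (not_lt.2 hxh1.le)
      · -- case 3b : pair (c, k)
        exact core1 c hjc hck hcj hcmax hB1a
          (fun m y hcm hmk hkm _ _ _ => h3a ⟨m, hcm, hmk, hkm⟩)
    · -- case 1 : T1, not T2
      exact core1 c hjc hck hcj hcmax hB1a (fun m y hcm hmk hkm hky hcy hyk => by
        rcases tri y j (ne_of_gt (hjk1.trans hky)) with h | h
        · exact absurd (hB1a y hky h) (not_lt.2 hcy.le)
        · exact hT2 ⟨m, y, hjc.trans hcm, hmk, hkm, hky, h, hyk⟩)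
  · -- not T1
    by_cases hT2 : ∃ m y, j < m ∧ m < k ∧ τ k < τ m ∧ k < y ∧ τ j < τ y ∧ τ y < τ k
    · -- case 2 : T2, not T1
      obtain ⟨m2, d2, hjm2, hm2k, hkm2, hkd2, hjd2, hd2k⟩ := hT2
      have hHne : (Finset.univ.filter
          (fun m => j < m ∧ m < k ∧ τ k < τ m)).Nonempty :=
        ⟨m2, Finset.mem_filter.2 ⟨Finset.mem_univ _, hjm2, hm2k, hkm2⟩⟩
      set b := (Finset.univ.filter (fun m => j < m ∧ m < k ∧ τ k < τ m)).min' hHne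
        with hbdef
      obtain ⟨-, hjb, hbk, hkb⟩ := Finset.mem_filter.1
        ((Finset.univ.filter (fun m => j < m ∧ m < k ∧ τ k < τ m)).min'_mem hHne)
      have hbmin : ∀ m, j < m → m < k → τ k < τ m → b ≤ m := fun m h1 h2 h3 =>
        Finset.min'_le _ m (Finset.mem_filter.2 ⟨Finset.mem_univ _, h1, h2, h3⟩)
      have hld : l0 < d2 := by
        rcases lt_trichotomy d2 l0 with h | h | h
        · exact absurd ⟨l0, h, hl0v⟩ (hJD d2 hkd2 hjd2 hd2k)
        · exact absurd hl0v (by rw [← h]; exact not_lt.2 (hjd2.le))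
        · exact h
      have hB2a : ∀ x, x < j → τ k < τ x → τ b < τ x := by
        intro x hxj hkx
        rcases tri x b (ne_of_lt (hxj.trans hjb)) with h | h
        · exact absurd (hp x b l0 d2 (hxj.trans hjb) (hbk.trans hl0) hld
            (hl0v.trans hjd2) (hd2k.trans hkx) h) id
        · exact h
      exact core2 b hjb hbk hkb hbmin hB2a (fun x m hxj hjx hxb hjm hmb hmj => by
        rcases tri x k (ne_of_lt (hxj.trans hjk1)) with h | h
        · exact hT1 ⟨x, m, hxj, hjx, h, hjm, hmb.trans hbk, hmj⟩
        · exact absurd hxb (not_lt.2 (hB2a x hxj h).le))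
    · -- neither T1 nor T2
      by_cases hT7 : ∃ h m, j < h ∧ h < m ∧ m < k ∧ τ k < τ h ∧ τ m < τ j
      · -- T7 only : use pair (c,k) again
        obtain ⟨h2, m2, hjh2, hh2m2, hm2k, hkh2, hm2j⟩ := hT7
        have hSne : (Finset.univ.filter
            (fun m => j < m ∧ m < k ∧ τ m < τ j)).Nonempty :=
          ⟨m2, Finset.mem_filter.2 ⟨Finset.mem_univ _, hjh2.trans hh2m2, hm2k, hm2j⟩⟩
        set c := (Finset.univ.filter (fun m => j < m ∧ m < k ∧ τ m < τ j)).max' hSne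
          with hcdef
        obtain ⟨-, hjc, hck, hcj⟩ := Finset.mem_filter.1
          ((Finset.univ.filter (fun m => j < m ∧ m < k ∧ τ m < τ j)).max'_mem hSne)
        have hcmax : ∀ m, j < m → m < k → τ m < τ j → m ≤ c := fun m h1 h2 h3 =>
          Finset.le_max' _ m (Finset.mem_filter.2 ⟨Finset.mem_univ _, h1, h2, h3⟩)
        have hh2c : h2 < c := lt_of_lt_of_le hh2m2
          (hcmax m2 (hjh2.trans hh2m2) hm2k hm2j)
        have hB1a : ∀ y, k < y → τ y < τ j → τ y < τ c := by
          intro y hky hyj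
          rcases tri y c (ne_of_gt (hck.trans hky)) with h | h
          · exact h
          · exact absurd (hp j h2 c y hjh2 hh2c (hck.trans hky) h hyj
              (hjk2.trans hkh2)) id
        exact core1 c hjc hck hcj hcmax hB1a (fun m y hcm hmk hkm hky hcy hyk => by
          rcases tri y j (ne_of_gt (hjk1.trans hky)) with h | h
          · exact absurd (hB1a y hky h) (not_lt.2 hcy.le)
          · exact hT2 ⟨m, y, hjc.trans hcm, hmk, hkm, hky, h, hyk⟩)
      · -- case 0 : (j,k) itself works
        refine ⟨i0, j, k, l0, hi0, hjk1, hl0, hl0v, hjk2, hi0v, ?_⟩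
        refine swap_good hp hjk1 hjk2 tight ?_ ?_ ?_ nT8
        · intro x m hxj hjx hxk hjm hmk hmj
          exact hT1 ⟨x, m, hxj, hjx, hxk, hjm, hmk, hmj⟩
        · intro m y hjm hmk hkm hky hjy hyk
          exact hT2 ⟨m, y, hjm, hmk, hkm, hky, hjy, hyk⟩
        · intro h m hjh hhm hmk hkh hmj
          exact hT7 ⟨h, m, hjh, hhm, hmk, hkh, hmj⟩

end SmoothPerm
end

section
/- For each n ≥ 1, the number of 321-avoiding smooth permutations in S_n equals the Fibonacci number F_{2n-1} (with F_1 = F_2 = 1). -/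
namespace SmoothPerm

variable {n : ℕ}

section AuxDev
open Equiv

/-! ### Auxiliary development: counting `Av(321, 3412)` -/

/-- The class of interest: 321-avoiding and 3412-avoiding (covexillary). -/
def Cls {N : ℕ} (σ : Equiv.Perm (Fin N)) : Prop := avoids321 σ ∧ covexillary σ

lemma avoids4231_of_avoids321 {N : ℕ} {σ : Equiv.Perm (Fin N)} (h : avoids321 σ) :
    avoids4231 σ := by
  rintro ⟨a, b, c, d, hab, hbc, hcd, h1, h2, h3⟩
  exact h ⟨a, c, d, hab.trans hbc, hcd, h1.trans h2, h3⟩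


open Equiv

variable {m : ℕ}

/-- Extension of a permutation by a fixed point at the end. -/
def ext (τ : Perm (Fin m)) : Perm (Fin (m+1)) :=
  finSuccEquivLast.symm.permCongr τ.optionCongr

@[simp] lemma ext_castSucc (τ : Perm (Fin m)) (i : Fin m) :
    ext τ i.castSucc = (τ i).castSucc := by
  simp [ext, Equiv.permCongr_apply]

@[simp] lemma ext_last (τ : Perm (Fin m)) : ext τ (Fin.last m) = Fin.last m := by
  simp [ext, Equiv.permCongr_apply]

/-- Restriction of a permutation (meaningful when it fixes the last point). -/
def res (σ : Perm (Fin (m+1))) : Perm (Fin m) :=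
  Equiv.removeNone (finSuccEquivLast.permCongr σ)

lemma res_castSucc (σ : Perm (Fin (m+1))) (h : σ (Fin.last m) = Fin.last m) (i : Fin m) :
    (res σ i).castSucc = σ i.castSucc := by
  have hne : σ i.castSucc ≠ Fin.last m := by
    intro hc
    exact (Fin.castSucc_lt_last i).ne (σ.injective (hc.trans h.symm))
  obtain ⟨j, hj⟩ := Fin.eq_castSucc_of_ne_last hne
  have h1 : (finSuccEquivLast.permCongr σ) (some i) = some j := by
    simp [Equiv.permCongr_apply, ← hj]
  have h2 := Equiv.removeNone_some (finSuccEquivLast.permCongr σ) ⟨j, h1⟩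
  rw [h1] at h2
  have : res σ i = j := Option.some_injective _ h2
  rw [this, hj]

lemma ext_res (σ : Perm (Fin (m+1))) (h : σ (Fin.last m) = Fin.last m) :
    ext (res σ) = σ := by
  ext x
  refine Fin.lastCases ?_ (fun i => ?_) x
  · simp [h]
  · rw [ext_castSucc, res_castSucc σ h]

lemma res_ext (τ : Perm (Fin m)) : res (ext τ) = τ := by
  apply Equiv.ext; intro i
  have := res_castSucc (ext τ) (ext_last τ) i
  rw [ext_castSucc] at this
  exact Fin.castSucc_injective _ this

lemma Cls_ext_iff (τ : Perm (Fin m)) : Cls (ext τ) ↔ Cls τ := by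
  constructor
  · rintro ⟨h1, h2⟩
    constructor
    · rintro ⟨a, b, c, hab, hbc, hv1, hv2⟩
      exact h1 ⟨a.castSucc, b.castSucc, c.castSucc, by
        simpa [Fin.castSucc_lt_castSucc_iff] using ⟨hab, hbc, hv1, hv2⟩⟩
    · rintro ⟨a, b, c, d, hab, hbc, hcd, hv1, hv2, hv3⟩
      exact h2 ⟨a.castSucc, b.castSucc, c.castSucc, d.castSucc, by
        simpa [Fin.castSucc_lt_castSucc_iff] using ⟨hab, hbc, hcd, hv1, hv2, hv3⟩⟩
  · rintro ⟨h1, h2⟩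
    constructor
    · rintro ⟨a, b, c, hab, hbc, hv1, hv2⟩
      obtain ⟨a', rfl⟩ := Fin.eq_castSucc_of_ne_last (Fin.ne_last_of_lt hab)
      obtain ⟨b', rfl⟩ := Fin.eq_castSucc_of_ne_last (Fin.ne_last_of_lt hbc)
      rcases eq_or_ne c (Fin.last m) with rfl | hcl
      · rw [ext_last] at hv1
        exact absurd hv1 (not_lt.mpr (Fin.le_last _))
      · obtain ⟨c', rfl⟩ := Fin.eq_castSucc_of_ne_last hcl
        simp only [ext_castSucc, Fin.castSucc_lt_castSucc_iff] at hab hbc hv1 hv2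
        exact h1 ⟨a', b', c', hab, hbc, hv1, hv2⟩
    · rintro ⟨a, b, c, d, hab, hbc, hcd, hv1, hv2, hv3⟩
      obtain ⟨a', rfl⟩ := Fin.eq_castSucc_of_ne_last (Fin.ne_last_of_lt hab)
      obtain ⟨b', rfl⟩ := Fin.eq_castSucc_of_ne_last (Fin.ne_last_of_lt hbc)
      obtain ⟨c', rfl⟩ := Fin.eq_castSucc_of_ne_last (Fin.ne_last_of_lt hcd)
      rcases eq_or_ne d (Fin.last m) with rfl | hdl
      · rw [ext_last] at hv2
        exact absurd hv2 (not_lt.mpr (Fin.le_last _))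
      · obtain ⟨d', rfl⟩ := Fin.eq_castSucc_of_ne_last hdl
        simp only [ext_castSucc, Fin.castSucc_lt_castSucc_iff] at hab hbc hcd hv1 hv2 hv3
        exact h2 ⟨a', b', c', d', hab, hbc, hcd, hv1, hv2, hv3⟩



/-! ### The two positions `uu`, `vv` in `Fin (m+2)` -/

def uu : Fin (m+2) := (Fin.last m).castSucc
def vv : Fin (m+2) := Fin.last (m+1)

lemma uu_lt_vv : (uu : Fin (m+2)) < vv := Fin.castSucc_lt_last _

lemma castSucc_ne_vv (x : Fin (m+1)) : x.castSucc ≠ (vv : Fin (m+2)) :=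
  (Fin.castSucc_lt_last x).ne

lemma castSucc_eq_uu_iff {x : Fin (m+1)} : x.castSucc = (uu : Fin (m+2)) ↔ x = Fin.last m :=
  Fin.castSucc_inj

lemma eq_vv_of_uu_lt {x : Fin (m+2)} (h : uu < x) : x = vv := by
  apply Fin.ext
  have h1 : (m : ℕ) < x.val := by simpa [uu, Fin.lt_def] using h
  have h2 : x.val < m + 2 := x.isLt
  simp only [vv, Fin.val_last]
  omega

lemma lt_uu_of_ne {x : Fin (m+2)} (hv : x ≠ vv) (hu : x ≠ uu) : x < uu := by
  rw [Fin.lt_def]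
  have h1 : x.val < m + 2 := x.isLt
  have h2 : x.val ≠ m + 1 := fun h => hv (Fin.ext (by simpa [vv] using h))
  have h3 : x.val ≠ m := fun h => hu (Fin.ext (by simpa [uu] using h))
  simp only [uu, Fin.coe_castSucc, Fin.val_last]
  omega

/-! ### The maps `σB` and `σC` -/

def σB (τ : Perm (Fin (m+1))) : Perm (Fin (m+2)) := ext τ * Equiv.swap uu vv

def σC (τ : Perm (Fin (m+1))) : Perm (Fin (m+2)) := Equiv.swap uu vv * ext τ

lemma σB_uu (τ : Perm (Fin (m+1))) : σB τ uu = vv := by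
  rw [σB, Perm.mul_apply, Equiv.swap_apply_left]
  exact ext_last τ

lemma σB_vv (τ : Perm (Fin (m+1))) : σB τ vv = (τ (Fin.last m)).castSucc := by
  rw [σB, Perm.mul_apply, Equiv.swap_apply_right]
  exact ext_castSucc τ (Fin.last m)

lemma σB_cs (τ : Perm (Fin (m+1))) {x : Fin (m+1)} (hx : x ≠ Fin.last m) :
    σB τ x.castSucc = (τ x).castSucc := by
  rw [σB, Perm.mul_apply,
    Equiv.swap_apply_of_ne_of_ne (fun h => hx (castSucc_eq_uu_iff.mp h)) (castSucc_ne_vv x)]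
  exact ext_castSucc τ x

lemma σC_vv (τ : Perm (Fin (m+1))) : σC τ vv = uu := by
  rw [σC, Perm.mul_apply]
  rw [show (vv : Fin (m+2)) = Fin.last (m+1) from rfl, ext_last]
  exact Equiv.swap_apply_right uu vv

lemma σC_cs_ne (τ : Perm (Fin (m+1))) {x : Fin (m+1)} (hx : τ x ≠ Fin.last m) :
    σC τ x.castSucc = (τ x).castSucc := by
  rw [σC, Perm.mul_apply, ext_castSucc]
  exact Equiv.swap_apply_of_ne_of_ne (fun h => hx (castSucc_eq_uu_iff.mp h)) (castSucc_ne_vv _)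

lemma σC_cs_eq (τ : Perm (Fin (m+1))) {x : Fin (m+1)} (hx : τ x = Fin.last m) :
    σC τ x.castSucc = vv := by
  rw [σC, Perm.mul_apply, ext_castSucc, hx]
  exact Equiv.swap_apply_left uu vv

/-! ### Pattern transfer for `σB` -/

lemma Cls_σB_iff (τ : Perm (Fin (m+1))) : Cls (σB τ) ↔ Cls τ := by
  constructor
  · rintro ⟨h1, h2⟩
    constructor
    · rintro ⟨a, b, c, hab, hbc, hv1, hv2⟩
      have hal := Fin.ne_last_of_lt hab
      have hbl := Fin.ne_last_of_lt hbc
      rcases eq_or_ne c (Fin.last m) with rfl | hcl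
      · refine h1 ⟨a.castSucc, b.castSucc, vv, ?_, Fin.castSucc_lt_last _, ?_, ?_⟩
        · simpa using hab
        · rw [σB_vv, σB_cs τ hbl]; simpa using hv1
        · rw [σB_cs τ hbl, σB_cs τ hal]; simpa using hv2
      · refine h1 ⟨a.castSucc, b.castSucc, c.castSucc, ?_, ?_, ?_, ?_⟩
        · simpa using hab
        · simpa using hbc
        · rw [σB_cs τ hcl, σB_cs τ hbl]; simpa using hv1
        · rw [σB_cs τ hbl, σB_cs τ hal]; simpa using hv2
    · rintro ⟨a, b, c, d, hab, hbc, hcd, hv1, hv2, hv3⟩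
      have hal := Fin.ne_last_of_lt hab
      have hbl := Fin.ne_last_of_lt hbc
      have hcl := Fin.ne_last_of_lt hcd
      rcases eq_or_ne d (Fin.last m) with rfl | hdl
      · refine h2 ⟨a.castSucc, b.castSucc, c.castSucc, vv, ?_, ?_, Fin.castSucc_lt_last _,
          ?_, ?_, ?_⟩
        · simpa using hab
        · simpa using hbc
        · rw [σB_cs τ hcl, σB_vv]; simpa using hv1
        · rw [σB_vv, σB_cs τ hal]; simpa using hv2
        · rw [σB_cs τ hal, σB_cs τ hbl]; simpa using hv3
      · refine h2 ⟨a.castSucc, b.castSucc, c.castSucc, d.castSucc, ?_, ?_, ?_, ?_, ?_, ?_⟩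
        · simpa using hab
        · simpa using hbc
        · simpa using hcd
        · rw [σB_cs τ hcl, σB_cs τ hdl]; simpa using hv1
        · rw [σB_cs τ hdl, σB_cs τ hal]; simpa using hv2
        · rw [σB_cs τ hal, σB_cs τ hbl]; simpa using hv3
  · rintro ⟨h1, h2⟩
    constructor
    · rintro ⟨A, B, C, hab, hbc, hv1, hv2⟩
      have hBu : B ≠ uu := by
        rintro rfl
        rw [σB_uu] at hv2
        exact (not_lt.mpr (Fin.le_last _)) hv2
      have hCu : C ≠ uu := by
        rintro rfl
        rw [σB_uu] at hv1
        exact (not_lt.mpr (Fin.le_last _)) hv1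
      have hAu : A ≠ uu := by
        rintro rfl
        rw [eq_vv_of_uu_lt hab] at hbc
        exact (not_lt.mpr (Fin.le_last C)) hbc
      obtain ⟨a', rfl⟩ := Fin.eq_castSucc_of_ne_last (Fin.ne_last_of_lt hab)
      obtain ⟨b', rfl⟩ := Fin.eq_castSucc_of_ne_last (Fin.ne_last_of_lt hbc)
      have ha'l : a' ≠ Fin.last m := fun h => hAu (castSucc_eq_uu_iff.mpr h)
      have hb'l : b' ≠ Fin.last m := fun h => hBu (castSucc_eq_uu_iff.mpr h)
      rcases eq_or_ne C vv with rfl | hCv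
      · rw [σB_vv, σB_cs τ hb'l] at hv1
        rw [σB_cs τ hb'l, σB_cs τ ha'l] at hv2
        exact h1 ⟨a', b', Fin.last m, by simpa using hab,
          lt_of_le_of_ne (Fin.le_last b') hb'l, by simpa using hv1, by simpa using hv2⟩
      · obtain ⟨c', rfl⟩ := Fin.eq_castSucc_of_ne_last hCv
        have hc'l : c' ≠ Fin.last m := fun h => hCu (castSucc_eq_uu_iff.mpr h)
        rw [σB_cs τ hc'l, σB_cs τ hb'l] at hv1
        rw [σB_cs τ hb'l, σB_cs τ ha'l] at hv2
        exact h1 ⟨a', b', c', by simpa using hab, by simpa using hbc,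
          by simpa using hv1, by simpa using hv2⟩
    · rintro ⟨A, B, C, D, hab, hbc, hcd, hv1, hv2, hv3⟩
      have hAu : A ≠ uu := by
        rintro rfl
        rw [σB_uu] at hv3
        exact (not_lt.mpr (Fin.le_last _)) hv3
      have hCu : C ≠ uu := by
        rintro rfl
        rw [σB_uu] at hv1
        exact (not_lt.mpr (Fin.le_last _)) hv1
      have hDu : D ≠ uu := by
        rintro rfl
        rw [σB_uu] at hv2
        exact (not_lt.mpr (Fin.le_last _)) hv2
      have hBu : B ≠ uu := by
        rintro rfl
        rw [eq_vv_of_uu_lt hbc] at hcd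
        exact (not_lt.mpr (Fin.le_last D)) hcd
      obtain ⟨a', rfl⟩ := Fin.eq_castSucc_of_ne_last (Fin.ne_last_of_lt hab)
      obtain ⟨b', rfl⟩ := Fin.eq_castSucc_of_ne_last (Fin.ne_last_of_lt hbc)
      obtain ⟨c', rfl⟩ := Fin.eq_castSucc_of_ne_last (Fin.ne_last_of_lt hcd)
      have ha'l : a' ≠ Fin.last m := fun h => hAu (castSucc_eq_uu_iff.mpr h)
      have hb'l : b' ≠ Fin.last m := fun h => hBu (castSucc_eq_uu_iff.mpr h)
      have hc'l : c' ≠ Fin.last m := fun h => hCu (castSucc_eq_uu_iff.mpr h)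
      rcases eq_or_ne D vv with rfl | hDv
      · rw [σB_cs τ hc'l, σB_vv] at hv1
        rw [σB_vv, σB_cs τ ha'l] at hv2
        rw [σB_cs τ ha'l, σB_cs τ hb'l] at hv3
        exact h2 ⟨a', b', c', Fin.last m, by simpa using hab, by simpa using hbc,
          lt_of_le_of_ne (Fin.le_last c') hc'l, by simpa using hv1, by simpa using hv2,
          by simpa using hv3⟩
      · obtain ⟨d', rfl⟩ := Fin.eq_castSucc_of_ne_last hDv
        have hd'l : d' ≠ Fin.last m := fun h => hDu (castSucc_eq_uu_iff.mpr h)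
        rw [σB_cs τ hc'l, σB_cs τ hd'l] at hv1
        rw [σB_cs τ hd'l, σB_cs τ ha'l] at hv2
        rw [σB_cs τ ha'l, σB_cs τ hb'l] at hv3
        exact h2 ⟨a', b', c', d', by simpa using hab, by simpa using hbc, by simpa using hcd,
          by simpa using hv1, by simpa using hv2, by simpa using hv3⟩



/-! ### Pattern transfer for `σC` -/

lemma Cls_σC_iff (τ : Perm (Fin (m+1))) : Cls (σC τ) ↔ Cls τ := by
  constructor
  · rintro ⟨h1, h2⟩
    constructor
    · rintro ⟨a, b, c, hab, hbc, hv1, hv2⟩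
      have hvbl : τ b ≠ Fin.last m := Fin.ne_last_of_lt hv2
      have hvcl : τ c ≠ Fin.last m := Fin.ne_last_of_lt hv1
      rcases eq_or_ne (τ a) (Fin.last m) with h | h
      · refine h1 ⟨a.castSucc, b.castSucc, c.castSucc, by simpa using hab, by simpa using hbc,
          ?_, ?_⟩
        · rw [σC_cs_ne τ hvcl, σC_cs_ne τ hvbl]; simpa using hv1
        · rw [σC_cs_ne τ hvbl, σC_cs_eq τ h]; exact Fin.castSucc_lt_last _
      · refine h1 ⟨a.castSucc, b.castSucc, c.castSucc, by simpa using hab, by simpa using hbc,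
          ?_, ?_⟩
        · rw [σC_cs_ne τ hvcl, σC_cs_ne τ hvbl]; simpa using hv1
        · rw [σC_cs_ne τ hvbl, σC_cs_ne τ h]; simpa using hv2
    · rintro ⟨a, b, c, d, hab, hbc, hcd, hv1, hv2, hv3⟩
      have hval : τ a ≠ Fin.last m := Fin.ne_last_of_lt hv3
      have hvdl : τ d ≠ Fin.last m := Fin.ne_last_of_lt hv2
      have hvcl : τ c ≠ Fin.last m := Fin.ne_last_of_lt hv1
      rcases eq_or_ne (τ b) (Fin.last m) with h | h
      · refine h2 ⟨a.castSucc, b.castSucc, c.castSucc, d.castSucc, by simpa using hab,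
          by simpa using hbc, by simpa using hcd, ?_, ?_, ?_⟩
        · rw [σC_cs_ne τ hvcl, σC_cs_ne τ hvdl]; simpa using hv1
        · rw [σC_cs_ne τ hvdl, σC_cs_ne τ hval]; simpa using hv2
        · rw [σC_cs_ne τ hval, σC_cs_eq τ h]; exact Fin.castSucc_lt_last _
      · refine h2 ⟨a.castSucc, b.castSucc, c.castSucc, d.castSucc, by simpa using hab,
          by simpa using hbc, by simpa using hcd, ?_, ?_, ?_⟩
        · rw [σC_cs_ne τ hvcl, σC_cs_ne τ hvdl]; simpa using hv1
        · rw [σC_cs_ne τ hvdl, σC_cs_ne τ hval]; simpa using hv2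
        · rw [σC_cs_ne τ hval, σC_cs_ne τ h]; simpa using hv3
  · rintro ⟨h1, h2⟩
    constructor
    · rintro ⟨A, B, C, hab, hbc, hv1, hv2⟩
      obtain ⟨a', rfl⟩ := Fin.eq_castSucc_of_ne_last (Fin.ne_last_of_lt hab)
      obtain ⟨b', rfl⟩ := Fin.eq_castSucc_of_ne_last (Fin.ne_last_of_lt hbc)
      have hb' : τ b' ≠ Fin.last m := by
        intro h
        rw [σC_cs_eq τ h] at hv2
        exact (not_lt.mpr (Fin.le_last _)) hv2
      rcases eq_or_ne C vv with rfl | hCv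
      · rw [σC_vv, σC_cs_ne τ hb'] at hv1
        have : Fin.last m < τ b' := by
          simpa [uu, Fin.castSucc_lt_castSucc_iff] using hv1
        exact (not_lt.mpr (Fin.le_last _)) this
      · obtain ⟨c', rfl⟩ := Fin.eq_castSucc_of_ne_last hCv
        have hc' : τ c' ≠ Fin.last m := by
          intro h
          rw [σC_cs_eq τ h] at hv1
          exact (not_lt.mpr (Fin.le_last _)) hv1
        rw [σC_cs_ne τ hc', σC_cs_ne τ hb'] at hv1
        rcases eq_or_ne (τ a') (Fin.last m) with h | h
        · refine h1 ⟨a', b', c', by simpa using hab, by simpa using hbc, by simpa using hv1, ?_⟩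
          rw [h]
          exact lt_of_le_of_ne (Fin.le_last _) hb'
        · rw [σC_cs_ne τ hb', σC_cs_ne τ h] at hv2
          exact h1 ⟨a', b', c', by simpa using hab, by simpa using hbc, by simpa using hv1,
            by simpa using hv2⟩
    · rintro ⟨A, B, C, D, hab, hbc, hcd, hv1, hv2, hv3⟩
      obtain ⟨a', rfl⟩ := Fin.eq_castSucc_of_ne_last (Fin.ne_last_of_lt hab)
      obtain ⟨b', rfl⟩ := Fin.eq_castSucc_of_ne_last (Fin.ne_last_of_lt hbc)
      obtain ⟨c', rfl⟩ := Fin.eq_castSucc_of_ne_last (Fin.ne_last_of_lt hcd)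
      have ha' : τ a' ≠ Fin.last m := by
        intro h
        rw [σC_cs_eq τ h] at hv3
        exact (not_lt.mpr (Fin.le_last _)) hv3
      have hc' : τ c' ≠ Fin.last m := by
        intro h
        rw [σC_cs_eq τ h] at hv1
        exact (not_lt.mpr (Fin.le_last _)) hv1
      rcases eq_or_ne D vv with rfl | hDv
      · rw [σC_vv, σC_cs_ne τ ha'] at hv2
        have : Fin.last m < τ a' := by
          simpa [uu, Fin.castSucc_lt_castSucc_iff] using hv2
        exact (not_lt.mpr (Fin.le_last _)) this
      · obtain ⟨d', rfl⟩ := Fin.eq_castSucc_of_ne_last hDv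
        have hd' : τ d' ≠ Fin.last m := by
          intro h
          rw [σC_cs_eq τ h] at hv2
          exact (not_lt.mpr (Fin.le_last _)) hv2
        rw [σC_cs_ne τ hc', σC_cs_ne τ hd'] at hv1
        rw [σC_cs_ne τ hd', σC_cs_ne τ ha'] at hv2
        rcases eq_or_ne (τ b') (Fin.last m) with h | h
        · refine h2 ⟨a', b', c', d', by simpa using hab, by simpa using hbc, by simpa using hcd,
            by simpa using hv1, by simpa using hv2, ?_⟩
          rw [h]
          exact lt_of_le_of_ne (Fin.le_last _) ha'
        · rw [σC_cs_ne τ ha', σC_cs_ne τ h] at hv3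
          exact h2 ⟨a', b', c', d', by simpa using hab, by simpa using hbc, by simpa using hcd,
            by simpa using hv1, by simpa using hv2, by simpa using hv3⟩

/-! ### The structure lemma -/

lemma map_vv_eq_uu (σ : Perm (Fin (m+2))) (hC : Cls σ) (h1 : σ vv ≠ vv) (h2 : σ uu ≠ vv) :
    σ vv = uu := by
  by_contra h3
  have hσv_lt : σ vv < uu := lt_uu_of_ne h1 h3
  have hp : σ (σ⁻¹ vv) = vv := σ.apply_symm_apply vv
  have hpv : σ⁻¹ vv ≠ vv := fun h => h1 (by nth_rewrite 1 [← h]; exact hp)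
  have hpu : σ⁻¹ vv ≠ uu := fun h => h2 (by rw [← h]; exact hp)
  have hpl : σ⁻¹ vv < uu := lt_uu_of_ne hpv hpu
  have huv : (uu : Fin (m+2)) < vv := uu_lt_vv
  have hσu_ne : σ uu ≠ uu := by
    intro h
    exact hC.1 ⟨σ⁻¹ vv, uu, vv, hpl, huv, by rw [h]; exact hσv_lt, by rw [h, hp]; exact huv⟩
  have hσu_lt : σ uu < uu := lt_uu_of_ne h2 hσu_ne
  have hq : σ (σ⁻¹ uu) = uu := σ.apply_symm_apply uu
  have hqv : σ⁻¹ uu ≠ vv := fun h => h3 (by rw [← h]; exact hq)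
  have hqp : σ⁻¹ uu ≠ σ⁻¹ vv := fun h => uu_lt_vv.ne ((σ⁻¹).injective h)
  have hqltp : σ⁻¹ uu < σ⁻¹ vv := by
    rcases lt_or_gt_of_ne hqp with h | h
    · exact h
    · exact absurd (hC.1 ⟨σ⁻¹ vv, σ⁻¹ uu, vv, h, lt_of_le_of_ne (Fin.le_last _) hqv,
        by rw [hq]; exact hσv_lt, by rw [hq, hp]; exact huv⟩) (fun hh => hh)
  have hσuv : σ uu < σ vv := by
    rcases lt_or_gt_of_ne (fun h => huv.ne (σ.injective h)) with h | h
    · exact h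
    · exact absurd (hC.1 ⟨σ⁻¹ vv, uu, vv, hpl, huv, h, by rw [hp]; exact hσu_lt.trans huv⟩)
        (fun hh => hh)
  exact hC.2 ⟨σ⁻¹ uu, σ⁻¹ vv, uu, vv, hqltp, hpl, huv, hσuv, by rw [hq]; exact hσv_lt,
    by rw [hq, hp]; exact huv⟩

/-! ### Inverse identities -/

lemma σB_res (σ : Perm (Fin (m+2))) (h : σ uu = vv) :
    σB (res (σ * Equiv.swap uu vv)) = σ := by
  have hfix : (σ * Equiv.swap uu vv : Perm (Fin (m+2))) (Fin.last (m+1)) = Fin.last (m+1) := by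
    rw [Perm.mul_apply, show Fin.last (m+1) = (vv : Fin (m+2)) from rfl, Equiv.swap_apply_right]
    exact h
  rw [σB, ext_res _ hfix, mul_assoc, Equiv.swap_mul_self, mul_one]

lemma σC_res (σ : Perm (Fin (m+2))) (h : σ vv = uu) :
    σC (res (Equiv.swap uu vv * σ)) = σ := by
  have hfix : (Equiv.swap uu vv * σ : Perm (Fin (m+2))) (Fin.last (m+1)) = Fin.last (m+1) := by
    rw [Perm.mul_apply, show Fin.last (m+1) = (vv : Fin (m+2)) from rfl, h,
      Equiv.swap_apply_left]
  rw [σC, ext_res _ hfix, ← mul_assoc, Equiv.swap_mul_self, one_mul]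

/-! ### The three bijections -/

def equivA : {σ : Perm (Fin (m+1)) // Cls σ ∧ σ (Fin.last m) = Fin.last m} ≃
    {τ : Perm (Fin m) // Cls τ} where
  toFun σ := ⟨res σ.1, (Cls_ext_iff _).mp (by rw [ext_res σ.1 σ.2.2]; exact σ.2.1)⟩
  invFun τ := ⟨ext τ.1, (Cls_ext_iff _).mpr τ.2, ext_last _⟩
  left_inv σ := Subtype.ext (ext_res σ.1 σ.2.2)
  right_inv τ := Subtype.ext (res_ext τ.1)

def equivB : {τ : Perm (Fin (m+1)) // Cls τ} ≃
    {σ : Perm (Fin (m+2)) // Cls σ ∧ σ uu = vv} where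
  toFun τ := ⟨σB τ.1, (Cls_σB_iff _).mpr τ.2, σB_uu _⟩
  invFun σ := ⟨res (σ.1 * Equiv.swap uu vv),
    (Cls_σB_iff _).mp (by rw [σB_res σ.1 σ.2.2]; exact σ.2.1)⟩
  left_inv τ := Subtype.ext (by
    simp only [σB]
    rw [mul_assoc, Equiv.swap_mul_self, mul_one, res_ext])
  right_inv σ := Subtype.ext (σB_res σ.1 σ.2.2)

lemma res_swap_ne (σ : Perm (Fin (m+2))) (hvu : σ vv = uu) (hne : σ uu ≠ vv) :
    res (Equiv.swap uu vv * σ) (Fin.last m) ≠ Fin.last m := by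
  intro h
  apply hne
  have hfix : (Equiv.swap uu vv * σ : Perm (Fin (m+2))) (Fin.last (m+1)) = Fin.last (m+1) := by
    rw [Perm.mul_apply, show Fin.last (m+1) = (vv : Fin (m+2)) from rfl, hvu,
      Equiv.swap_apply_left]
  have hcs := res_castSucc _ hfix (Fin.last m)
  rw [h, Perm.mul_apply] at hcs
  have h2 := congrArg (Equiv.swap uu vv) hcs.symm
  rw [Equiv.swap_apply_self] at h2
  rw [show ((Fin.last m).castSucc : Fin (m+2)) = uu from rfl] at h2
  rw [Equiv.swap_apply_left] at h2
  exact h2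

def equivC : {τ : Perm (Fin (m+1)) // Cls τ ∧ τ (Fin.last m) ≠ Fin.last m} ≃
    {σ : Perm (Fin (m+2)) // Cls σ ∧ (σ vv ≠ vv ∧ σ uu ≠ vv)} where
  toFun τ := ⟨σC τ.1, (Cls_σC_iff _).mpr τ.2.1,
    by rw [σC_vv]; exact uu_lt_vv.ne,
    by
      rw [show (uu : Fin (m+2)) = (Fin.last m).castSucc from rfl, σC_cs_ne τ.1 τ.2.2]
      exact castSucc_ne_vv _⟩
  invFun σ := ⟨res (Equiv.swap uu vv * σ.1),
    (Cls_σC_iff _).mp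
      (by rw [σC_res σ.1 (map_vv_eq_uu σ.1 σ.2.1 σ.2.2.1 σ.2.2.2)]; exact σ.2.1),
    res_swap_ne σ.1 (map_vv_eq_uu σ.1 σ.2.1 σ.2.2.1 σ.2.2.2) σ.2.2.2⟩
  left_inv τ := Subtype.ext (by
    simp only [σC]
    rw [← mul_assoc, Equiv.swap_mul_self, one_mul, res_ext])
  right_inv σ := Subtype.ext (σC_res σ.1 (map_vv_eq_uu σ.1 σ.2.1 σ.2.2.1 σ.2.2.2))



/-! ### Counting -/

lemma card_split {α : Type*} [Finite α] (p q : α → Prop) :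
    Nat.card {x // p x} = Nat.card {x // p x ∧ q x} + Nat.card {x // p x ∧ ¬ q x} := by
  classical
  have e : {x // p x} ≃ {x // p x ∧ q x} ⊕ {x // p x ∧ ¬ q x} :=
    (Equiv.sumCompl (fun x : {x // p x} => q x.1)).symm.trans
      (Equiv.sumCongr (Equiv.subtypeSubtypeEquivSubtypeInter p q)
        (Equiv.subtypeSubtypeEquivSubtypeInter p fun x => ¬ q x))
  rw [Nat.card_congr e, Nat.card_sum]

noncomputable def clsA (k : ℕ) : ℕ := Nat.card {σ : Perm (Fin k) // Cls σ}

noncomputable def clsB (k : ℕ) : ℕ :=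
  Nat.card {σ : Perm (Fin (k+1)) // Cls σ ∧ σ (Fin.last k) ≠ Fin.last k}

lemma clsA_succ (k : ℕ) : clsA (k+1) = clsA k + clsB k := by
  have h1 : Nat.card {σ : Perm (Fin (k+1)) // Cls σ ∧ σ (Fin.last k) = Fin.last k} = clsA k :=
    Nat.card_congr equivA
  rw [clsA, card_split (fun σ : Perm (Fin (k+1)) => Cls σ)
    (fun σ => σ (Fin.last k) = Fin.last k), h1]
  rfl

lemma clsB_succ (k : ℕ) : clsB (k+1) = clsA (k+1) + clsB k := by
  have h := card_split (fun σ : Perm (Fin (k+2)) => Cls σ ∧ σ vv ≠ vv)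
    (fun σ => σ uu = vv)
  have hB : Nat.card {σ : Perm (Fin (k+2)) // (Cls σ ∧ σ vv ≠ vv) ∧ σ uu = vv} =
      clsA (k+1) := by
    rw [Nat.card_congr (Equiv.subtypeEquivRight (q := fun σ : Perm (Fin (k+2)) =>
      Cls σ ∧ σ uu = vv) (fun σ => ?_))]
    · exact (Nat.card_congr equivB.symm)
    · constructor
      · rintro ⟨⟨h1, _⟩, h2⟩; exact ⟨h1, h2⟩
      · rintro ⟨h1, h2⟩
        refine ⟨⟨h1, fun hv => ?_⟩, h2⟩
        exact uu_lt_vv.ne (σ.injective (h2.trans hv.symm))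
  have hC : Nat.card {σ : Perm (Fin (k+2)) // (Cls σ ∧ σ vv ≠ vv) ∧ ¬ σ uu = vv} =
      clsB k := by
    rw [Nat.card_congr (Equiv.subtypeEquivRight (q := fun σ : Perm (Fin (k+2)) =>
      Cls σ ∧ (σ vv ≠ vv ∧ σ uu ≠ vv)) (fun σ => by tauto))]
    exact Nat.card_congr equivC.symm
  have : clsB (k+1) =
      Nat.card {σ : Perm (Fin (k+2)) // Cls σ ∧ σ vv ≠ vv} := rfl
  rw [this, h, hB, hC]

lemma cls_triv {σ : Perm (Fin 1)} : Cls σ := by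
  constructor
  · rintro ⟨a, b, c, hab, -⟩
    have ha := a.isLt
    have hb := b.isLt
    have := Fin.lt_def.mp hab
    omega
  · rintro ⟨a, b, c, d, hab, -⟩
    have ha := a.isLt
    have hb := b.isLt
    have := Fin.lt_def.mp hab
    omega

lemma clsA_one : clsA 1 = 1 := by
  rw [clsA]
  have : Subsingleton (Perm (Fin 1)) := ⟨fun a b => Equiv.ext fun x => Subsingleton.elim _ _⟩
  have : Nonempty {σ : Perm (Fin 1) // Cls σ} := ⟨⟨1, cls_triv⟩⟩
  exact Nat.card_unique

lemma clsB_zero : clsB 0 = 0 := by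
  rw [clsB]
  have : IsEmpty {σ : Perm (Fin 1) // Cls σ ∧ σ (Fin.last 0) ≠ Fin.last 0} :=
    ⟨fun x => x.2.2 (Subsingleton.elim _ _)⟩
  exact Nat.card_of_isEmpty

lemma main_count : ∀ k : ℕ, clsA (k+1) = Nat.fib (2*k+1) ∧ clsB k = Nat.fib (2*k) := by
  intro k
  induction k with
  | zero => exact ⟨by rw [clsA_one]; rfl, by rw [clsB_zero]; rfl⟩
  | succ k ih =>
    have hB : clsB (k+1) = Nat.fib (2*(k+1)) := by
      rw [clsB_succ, ih.1, ih.2, show 2*(k+1) = 2*k+2 by ring, Nat.fib_add_two]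
      omega
    refine ⟨?_, hB⟩
    rw [clsA_succ, ih.1, hB, show 2*(k+1)+1 = (2*k+1)+2 by ring, Nat.fib_add_two,
      show 2*k+1+1 = 2*(k+1) by ring]


end AuxDev

/-- the number of 321-avoiding smooth permutations in S_n is F_{2n-1}. -/
theorem card_avoids321_smooth (n : ℕ) (hn : 1 ≤ n) :
    Nat.card {σ : Equiv.Perm (Fin n) // avoids321 σ ∧ avoids4231 σ ∧ covexillary σ} =
      Nat.fib (2 * n - 1) := by
  obtain ⟨k, rfl⟩ : ∃ k, n = k + 1 := ⟨n - 1, by omega⟩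
  have he : ∀ σ : Equiv.Perm (Fin (k+1)),
      (avoids321 σ ∧ avoids4231 σ ∧ covexillary σ) ↔ Cls σ := by
    intro σ
    constructor
    · rintro ⟨h1, _, h3⟩; exact ⟨h1, h3⟩
    · rintro ⟨h1, h3⟩; exact ⟨h1, avoids4231_of_avoids321 h1, h3⟩
  rw [Nat.card_congr (Equiv.subtypeEquivRight he)]
  rw [show 2*(k+1)-1 = 2*k+1 by omega]
  exact (main_count k).1

end SmoothPerm
end
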